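/- arXiv:1304.0949 — 12 statements merged into one kernel-verified Lean document; each statement's English description precedes it below -/
import Mathlib

section
/- Let n ≥ 1 with n ≡ 0, 1 or 2 (mod 4), and let ℱ be a family of subsets of {1,2,…,n} such that for every two distinct members F, F' ∈ ℱ the cardinality of the symmetric difference F ⊕ F' is not a multiple of 4. Then |ℱ| ≤ 2n. -/
open Finset

def EFB.vv {R : Type*} [Semiring R] (n : ℕ) (F : Finset (Fin n)) : Fin n → R :=
  fun i => if i ∈ F then 1 else 0

namespace EFB

lemma dot {R : Type*} [CommSemiring R] {n : ℕ} (F G : Finset (Fin n)) :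
    ∑ k, (vv (R := R) n F k) * (vv (R := R) n G k) = ((F ∩ G).card : R) := by
  unfold vv
  have : ∀ k : Fin n, (if k ∈ F then (1:R) else 0) * (if k ∈ G then 1 else 0)
      = if k ∈ F ∩ G then 1 else 0 := by
    intro k; by_cases h1 : k ∈ F <;> by_cases h2 : k ∈ G <;> simp [h1, h2, Finset.mem_inter]
  simp_rw [this]
  rw [Finset.sum_boole]
  congr 1
  rw [Finset.filter_mem_eq_inter, Finset.univ_inter]

lemma sum_vv_apply {R : Type*} [Semiring R] {n : ℕ} (𝒜 : Finset (Finset (Fin n))) (k : Fin n) :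
    ∑ F ∈ 𝒜, vv (R := R) n F k = (((𝒜.filter (fun F => k ∈ F)).card : R)) := by
  unfold vv
  rw [Finset.sum_boole]

lemma zmod4_cast_two {m : ℕ} (h : m % 4 = 2) : (m : ZMod 4) = 2 := by
  rw [← ZMod.natCast_mod m 4, h]; rfl

lemma pair_sum {n : ℕ} {M : Type*} [AddCommMonoid M] (𝒜 : Finset (Finset (Fin n)))
    (f : Finset (Fin n) → Finset (Fin n) → M) :
    ∑ p ∈ (𝒜 ×ˢ 𝒜).filter (fun p => p.1 ≠ p.2), f p.1 p.2
      = ∑ F ∈ 𝒜, ∑ G ∈ 𝒜.erase F, f F G := by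
  rw [Finset.sum_filter, Finset.sum_product]
  refine Finset.sum_congr rfl fun F _ => ?_
  rw [← Finset.filter_ne 𝒜 F, Finset.sum_filter]

lemma dc {n : ℕ} (𝒜 : Finset (Finset (Fin n))) (m : ℕ) (hm : 𝒜.card = m)
    (h2 : ∀ F ∈ 𝒜, F.card % 4 = 2)
    (hodd : ∀ F ∈ 𝒜, ∀ G ∈ 𝒜, F ≠ G → (F ∩ G).card % 2 = 1)
    (hdeg : ∀ k, (𝒜.filter (fun F => k ∈ F)).card % 2 = 0) :
    (4 : ℕ) ∣ 2 * m + m * (m - 1) := by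
  classical
  have hT : ∑ F ∈ 𝒜, ∑ G ∈ 𝒜, ((F ∩ G).card : ZMod 4)
      = ∑ k : Fin n, ((𝒜.filter (fun F => k ∈ F)).card : ZMod 4) ^ 2 := by
    calc ∑ F ∈ 𝒜, ∑ G ∈ 𝒜, ((F ∩ G).card : ZMod 4)
        = ∑ F ∈ 𝒜, ∑ G ∈ 𝒜, ∑ k, vv (R := ZMod 4) n F k * vv n G k := by
          simp_rw [dot]
      _ = ∑ F ∈ 𝒜, ∑ k, ∑ G ∈ 𝒜, vv (R := ZMod 4) n F k * vv n G k := by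
          exact Finset.sum_congr rfl fun F _ => Finset.sum_comm
      _ = ∑ k, ∑ F ∈ 𝒜, ∑ G ∈ 𝒜, vv (R := ZMod 4) n F k * vv n G k := Finset.sum_comm
      _ = ∑ k, (∑ F ∈ 𝒜, vv (R := ZMod 4) n F k) * (∑ G ∈ 𝒜, vv (R := ZMod 4) n G k) := by
          refine Finset.sum_congr rfl fun k _ => ?_
          rw [Finset.sum_mul_sum]
      _ = ∑ k : Fin n, ((𝒜.filter (fun F => k ∈ F)).card : ZMod 4) ^ 2 := by
          refine Finset.sum_congr rfl fun k _ => ?_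
          rw [sum_vv_apply, sq]
  have hTz : ∑ F ∈ 𝒜, ∑ G ∈ 𝒜, ((F ∩ G).card : ZMod 4) = 0 := by
    rw [hT]
    refine Finset.sum_eq_zero fun k _ => ?_
    obtain ⟨e, he⟩ : ∃ e, (𝒜.filter (fun F => k ∈ F)).card = 2 * e :=
      ⟨(𝒜.filter (fun F => k ∈ F)).card / 2, by have := hdeg k; omega⟩
    rw [he]
    have h4 : ((2 * e : ℕ) : ZMod 4) ^ 2 = ((4 * (e * e) : ℕ) : ZMod 4) := by push_cast; ring
    rw [h4, (ZMod.natCast_eq_zero_iff _ 4).mpr ⟨e * e, rfl⟩]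
  have hsplit : ∑ F ∈ 𝒜, ∑ G ∈ 𝒜, ((F ∩ G).card : ZMod 4)
      = ∑ F ∈ 𝒜, (((F.card : ZMod 4)) + ∑ G ∈ 𝒜.erase F, ((F ∩ G).card : ZMod 4)) := by
    refine Finset.sum_congr rfl fun F hF => ?_
    rw [← Finset.add_sum_erase _ _ hF, Finset.inter_self]
  have hdiag : ∑ F ∈ 𝒜, ((F.card : ZMod 4)) = ((2 * m : ℕ) : ZMod 4) := by
    rw [Finset.sum_congr rfl fun F hF => zmod4_cast_two (h2 F hF), Finset.sum_const, hm]
    push_cast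
    ring
  have hScard : ((𝒜 ×ˢ 𝒜).filter (fun p => p.1 ≠ p.2)).card = m * (m - 1) := by
    rw [Finset.card_eq_sum_ones, pair_sum 𝒜 (fun _ _ => (1 : ℕ))]
    rw [Finset.sum_congr rfl fun F hF => by
      rw [Finset.sum_const, Finset.card_erase_of_mem hF, smul_eq_mul, mul_one]]
    rw [Finset.sum_const, hm, smul_eq_mul]
  have hinv : ∑ p ∈ (𝒜 ×ˢ 𝒜).filter (fun p => p.1 ≠ p.2),
      (((p.1 ∩ p.2).card : ZMod 4) - 1) = 0 := by
    refine Finset.sum_involution (fun p _ => (p.2, p.1)) ?_ ?_ ?_ ?_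
    · intro p hp
      have hp' := Finset.mem_filter.mp hp
      have h1 := Finset.mem_product.mp hp'.1
      have hodd' := hodd p.1 h1.1 p.2 h1.2 hp'.2
      obtain ⟨e, he⟩ : ∃ e, (p.1 ∩ p.2).card = 2 * e + 1 :=
        ⟨(p.1 ∩ p.2).card / 2, by omega⟩
      show ((p.1 ∩ p.2).card : ZMod 4) - 1 + (((p.2 ∩ p.1).card : ZMod 4) - 1) = 0
      rw [Finset.inter_comm p.2 p.1, he]
      calc ((2 * e + 1 : ℕ) : ZMod 4) - 1 + (((2 * e + 1 : ℕ) : ZMod 4) - 1)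
          = 4 * (e : ZMod 4) := by push_cast; ring
        _ = 0 := by rw [show (4 : ZMod 4) = 0 from rfl, zero_mul]
    · intro p hp _
      have hp' := (Finset.mem_filter.mp hp).2
      intro hq
      exact hp' (congrArg Prod.fst hq).symm
    · intro p hp
      have hp' := Finset.mem_filter.mp hp
      have h1 := Finset.mem_product.mp hp'.1
      exact Finset.mem_filter.mpr ⟨Finset.mem_product.mpr ⟨h1.2, h1.1⟩, fun e => hp'.2 e.symm⟩
    · intro p hp; rfl
  have hoff : ∑ F ∈ 𝒜, ∑ G ∈ 𝒜.erase F, ((F ∩ G).card : ZMod 4)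
      = ((m * (m - 1) : ℕ) : ZMod 4) := by
    rw [← pair_sum 𝒜 (fun F G => ((F ∩ G).card : ZMod 4))]
    have hrw : ∀ p ∈ (𝒜 ×ˢ 𝒜).filter (fun p => p.1 ≠ p.2),
        ((p.1 ∩ p.2).card : ZMod 4) = (((p.1 ∩ p.2).card : ZMod 4) - 1) + 1 :=
      fun p _ => by ring
    rw [Finset.sum_congr rfl hrw, Finset.sum_add_distrib, hinv, zero_add,
      Finset.sum_const, hScard]
    simp [nsmul_eq_mul]
  rw [hsplit, Finset.sum_add_distrib, hdiag, hoff, ← Nat.cast_add] at hTz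
  exact (ZMod.natCast_eq_zero_iff _ 4).mp hTz

lemma zmod2_cast_of_even {m : ℕ} (h : m % 2 = 0) : (m : ZMod 2) = 0 := by
  rw [← ZMod.natCast_mod m 2, h, Nat.cast_zero]

lemma zmod2_cast_of_odd {m : ℕ} (h : m % 2 = 1) : (m : ZMod 2) = 1 := by
  rw [← ZMod.natCast_mod m 2, h, Nat.cast_one]

lemma even_of_zmod2 {m : ℕ} (h : (m : ZMod 2) = 0) : m % 2 = 0 := by
  rw [← ZMod.natCast_mod m 2] at h
  have h2 : m % 2 < 2 := Nat.mod_lt _ (by norm_num)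
  interval_cases hm : m % 2
  · rfl
  · simp at h

lemma odd_of_zmod2 {m : ℕ} (h : (m : ZMod 2) = 1) : m % 2 = 1 := by
  rw [← ZMod.natCast_mod m 2] at h
  have h2 : m % 2 < 2 := Nat.mod_lt _ (by norm_num)
  interval_cases hm : m % 2
  · simp at h
  · rfl


lemma key {n : ℕ} {ι : Type*} [Fintype ι] [DecidableEq ι] (Fs : ι → Finset (Fin n))
    (hself : ∀ i, (((Fs i).card : ZMod 2)) = 0)
    (hpair : ∀ i j, i ≠ j → (((Fs i ∩ Fs j).card : ZMod 2)) = 1)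
    (w : Fin n → ZMod 2) (hw : ∀ j, ∑ k, w k * vv n (Fs j) k = 0)
    (c : ι → ZMod 2) (hc : ∑ i, c i • vv (R := ZMod 2) n (Fs i) = w) :
    ∀ j, c j = ∑ i, c i := by
  intro j
  have h1 : ∑ k, (∑ i, c i • vv (R := ZMod 2) n (Fs i)) k * vv n (Fs j) k = 0 := by
    rw [hc]; exact hw j
  have h2 : ∑ i, c i * ((Fs i ∩ Fs j).card : ZMod 2) = 0 := by
    calc ∑ i, c i * ((Fs i ∩ Fs j).card : ZMod 2)
        = ∑ i, c i * ∑ k, vv (R := ZMod 2) n (Fs i) k * vv n (Fs j) k := by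
          simp_rw [dot]
      _ = ∑ i, ∑ k, c i * (vv (R := ZMod 2) n (Fs i) k * vv n (Fs j) k) := by
          simp_rw [Finset.mul_sum]
      _ = ∑ k, ∑ i, c i * (vv (R := ZMod 2) n (Fs i) k * vv n (Fs j) k) := Finset.sum_comm
      _ = ∑ k, (∑ i, c i • vv (R := ZMod 2) n (Fs i)) k * vv n (Fs j) k := by
          refine Finset.sum_congr rfl fun k _ => ?_
          rw [Finset.sum_apply, Finset.sum_mul]
          exact Finset.sum_congr rfl fun i _ => by simp [smul_eq_mul, mul_assoc]
      _ = 0 := h1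
  have hterm : ∀ i ∈ Finset.univ.erase j, c i * ((Fs i ∩ Fs j).card : ZMod 2) = c i := by
    intro i hi
    rw [hpair i j (Finset.ne_of_mem_erase hi), mul_one]
  have hj : c j * ((Fs j ∩ Fs j).card : ZMod 2) = 0 := by
    rw [Finset.inter_self, hself j, mul_zero]
  rw [← Finset.add_sum_erase _ _ (Finset.mem_univ j), hj, zero_add,
    Finset.sum_congr rfl hterm] at h2
  rw [← Finset.add_sum_erase _ c (Finset.mem_univ j), h2, add_zero]


lemma sum_vv {R : Type*} [Semiring R] {n : ℕ} (F : Finset (Fin n)) :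
    ∑ k, vv (R := R) n F k = (F.card : R) := by
  unfold vv
  rw [Finset.sum_boole]
  congr 1
  rw [Finset.filter_mem_eq_inter, Finset.univ_inter]

lemma deg_sum {n : ℕ} (𝒜 : Finset (Finset (Fin n))) :
    ∑ k : Fin n, (𝒜.filter (fun F => k ∈ F)).card = ∑ F ∈ 𝒜, F.card := by
  classical
  simp_rw [Finset.card_filter]
  rw [Finset.sum_comm]
  refine Finset.sum_congr rfl fun F _ => ?_
  rw [← Finset.card_filter, Finset.filter_mem_eq_inter, Finset.univ_inter]

lemma zmod2_cases (x : ZMod 2) : x = 0 ∨ x = 1 := by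
  revert x; decide

lemma lemB {n : ℕ} (hn : 1 ≤ n) (hn3 : n % 4 ≠ 3) (𝒜 : Finset (Finset (Fin n)))
    (h2 : ∀ F ∈ 𝒜, F.card % 4 = 2)
    (hodd : ∀ F ∈ 𝒜, ∀ G ∈ 𝒜, F ≠ G → (F ∩ G).card % 2 = 1) :
    𝒜.card < n := by
  classical
  by_contra hcon
  push_neg at hcon
  haveI : Fact (Nat.Prime 2) := ⟨Nat.prime_two⟩
  set m := 𝒜.card with hm
  have hcardι : Fintype.card ↥𝒜 = m := Fintype.card_coe 𝒜
  set Fs : ↥𝒜 → Finset (Fin n) := fun i => i.1 with hFs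
  have hself : ∀ i : ↥𝒜, (((Fs i).card : ZMod 2)) = 0 := by
    intro i
    apply zmod2_cast_of_even
    have := h2 i.1 i.2
    show (i.1 : Finset (Fin n)).card % 2 = 0
    omega
  have hpair : ∀ i j : ↥𝒜, i ≠ j → (((Fs i ∩ Fs j).card : ZMod 2)) = 1 := fun i j hij =>
    zmod2_cast_of_odd (hodd i.1 i.2 j.1 j.2 (fun e => hij (Subtype.ext e)))
  set u : Fin n → ZMod 2 := fun _ => 1 with hu
  have hwu : ∀ j : ↥𝒜, ∑ k, u k * vv n (Fs j) k = 0 := by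
    intro j
    have h0 : ∑ k, u k * vv (R := ZMod 2) n (Fs j) k = ∑ k, vv (R := ZMod 2) n (Fs j) k :=
      Finset.sum_congr rfl fun k _ => one_mul _
    rw [h0, sum_vv, hself j]
  have hw0 : ∀ j : ↥𝒜, ∑ k, (0 : Fin n → ZMod 2) k * vv n (Fs j) k = 0 := by
    intro j; simp
  have hfinrank : Module.finrank (ZMod 2) (Fin n → ZMod 2) = n := Module.finrank_fin_fun _
  -- the sum over the subtype equals the filter-card
  have hsubsum : ∀ k : Fin n, ∑ i : ↥𝒜, vv (R := ZMod 2) n (Fs i) k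
      = ((𝒜.filter (fun F => k ∈ F)).card : ZMod 2) := by
    intro k
    rw [show (∑ i : ↥𝒜, vv (R := ZMod 2) n (Fs i) k) = ∑ F ∈ 𝒜, vv (R := ZMod 2) n F k from
      Finset.sum_coe_sort 𝒜 (fun F => vv (R := ZMod 2) n F k), sum_vv_apply]
  by_cases hLI : LinearIndependent (ZMod 2) fun i : ↥𝒜 => vv (R := ZMod 2) n (Fs i)
  · -- independent case
    have hle : m ≤ n := by
      have := hLI.fintype_card_le_finrank
      rwa [hcardι, hfinrank] at this
    have hmn : m = n := le_antisymm hle hcon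
    haveI : Nonempty ↥𝒜 := by
      rw [← Fintype.card_pos_iff, hcardι]; omega
    have hcardeq : Fintype.card ↥𝒜 = Module.finrank (ZMod 2) (Fin n → ZMod 2) := by
      rw [hcardι, hfinrank, hmn]
    set b := basisOfLinearIndependentOfCardEqFinrank hLI hcardeq with hb
    set a : ↥𝒜 → ZMod 2 := fun i => b.repr u i with ha
    have hrep : ∑ i, a i • vv (R := ZMod 2) n (Fs i) = u := by
      have hb2 : ⇑b = fun i => vv (R := ZMod 2) n (Fs i) :=
        coe_basisOfLinearIndependentOfCardEqFinrank hLI hcardeq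
      have hbr := b.sum_repr u
      rw [hb2] at hbr
      exact hbr
    have hkey := key Fs hself hpair u hwu a hrep
    rcases zmod2_cases (∑ i, a i) with hs0 | hs1
    · have hu0 : u = 0 := by
        rw [← hrep]
        exact Finset.sum_eq_zero fun i _ => by rw [hkey i, hs0, zero_smul]
      exact one_ne_zero (congrFun hu0 ⟨0, hn⟩)
    · have hall : ∀ i, a i = 1 := fun i => by rw [hkey i, hs1]
      have hsm : (m : ZMod 2) = 1 := by
        rw [← hs1, Finset.sum_congr rfl fun i _ => hall i, Finset.sum_const,
          Finset.card_univ, hcardι, nsmul_eq_mul, mul_one]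
      have hdeg : ∀ k, ((𝒜.filter (fun F => k ∈ F)).card : ZMod 2) = 1 := by
        intro k
        rw [← hsubsum k]
        have hk : u k = 1 := rfl
        rw [← hk, ← hrep, Finset.sum_apply]
        exact Finset.sum_congr rfl fun i _ => by rw [hall i, one_smul]
      -- parity contradiction: n even but m = n odd
      have hnz : (n : ZMod 2) = 0 := by
        have hc1 : ((∑ k : Fin n, (𝒜.filter (fun F => k ∈ F)).card : ℕ) : ZMod 2)
            = (n : ZMod 2) := by
          push_cast
          rw [Finset.sum_congr rfl fun k _ => hdeg k, Finset.sum_const, Finset.card_univ,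
            Fintype.card_fin, nsmul_eq_mul, mul_one]
        have hc2 : ((∑ F ∈ 𝒜, F.card : ℕ) : ZMod 2) = 0 := by
          push_cast
          refine Finset.sum_eq_zero fun F hF => ?_
          exact zmod2_cast_of_even (by have := h2 F hF; omega)
        rw [← hc1, deg_sum, hc2]
      rw [← hmn, hsm] at hnz
      exact one_ne_zero hnz
  · -- dependent case
    obtain ⟨g, hg, i0, hgi0⟩ := Fintype.not_linearIndependent_iff.mp hLI
    have hkeyg := key Fs hself hpair 0 hw0 g hg
    have hsg1 : (∑ i, g i) = 1 := by
      rcases zmod2_cases (∑ i, g i) with h | h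
      · exact absurd (by rw [hkeyg i0, h]) hgi0
      · exact h
    have hgall : ∀ i, g i = 1 := fun i => by rw [hkeyg i, hsg1]
    have hdep : ∑ i : ↥𝒜, vv (R := ZMod 2) n (Fs i) = 0 := by
      rw [← hg]
      exact (Finset.sum_congr rfl fun i _ => by rw [hgall i, one_smul]).symm
    have hmodd : (m : ZMod 2) = 1 := by
      rw [← hsg1, Finset.sum_congr rfl fun i _ => hgall i, Finset.sum_const,
        Finset.card_univ, hcardι, nsmul_eq_mul, mul_one]
    have hm2 : m % 2 = 1 := odd_of_zmod2 hmodd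
    -- sub-independence: dropping i0 yields independent vectors
    have hLI' : LinearIndependent (ZMod 2) fun i : {x : ↥𝒜 // x ≠ i0} => vv (R := ZMod 2) n (Fs i.1) := by
      rw [Fintype.linearIndependent_iff]
      intro g' hg' j
      set c : ↥𝒜 → ZMod 2 := fun i => if h : i = i0 then 0 else g' ⟨i, h⟩ with hcdef
      have hcsub : ∀ i : {x : ↥𝒜 // x ≠ i0}, c i.1 = g' i := by
        intro i
        rw [hcdef]
        simp only [dif_neg i.2]
      have hci0 : c i0 = 0 := by rw [hcdef]; simp
      have hcsum : ∑ i, c i • vv (R := ZMod 2) n (Fs i) = 0 := by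
        rw [Fintype.sum_eq_add_sum_compl i0 (fun i => c i • vv (R := ZMod 2) n (Fs i)),
          hci0, zero_smul, zero_add]
        rw [Finset.sum_subtype (p := fun x : ↥𝒜 => x ≠ i0) ({i0}ᶜ : Finset ↥𝒜)
          (fun x => by simp) (fun i => c i • vv (R := ZMod 2) n (Fs i))]
        rw [← hg']
        exact Finset.sum_congr rfl fun i _ => by rw [hcsub i]
      have hkeyc := key Fs hself hpair 0 hw0 c hcsum
      have hc0 : (∑ i, c i) = 0 := by
        have := hkeyc i0
        rw [hcdef] at this
        simp only [dif_pos rfl] at this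
        exact this.symm
      rw [← hcsub j, hkeyc j.1, hc0]
    have hcard' : Fintype.card {x : ↥𝒜 // x ≠ i0} = m - 1 := by
      have h := Fintype.card_subtype_compl (fun x : ↥𝒜 => x = i0)
      rw [Fintype.card_subtype_eq, hcardι] at h
      exact h
    have hle' : m - 1 ≤ n := by
      have := hLI'.fintype_card_le_finrank
      rwa [hcard', hfinrank] at this
    have hcases : m = n ∨ m = n + 1 := by omega
    rcases hcases with hmn | hmn1
    · -- m = n : use the mod-4 double counting
      have hdeg : ∀ k, (𝒜.filter (fun F => k ∈ F)).card % 2 = 0 := by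
        intro k
        apply even_of_zmod2
        rw [← hsubsum k]
        have := congrFun hdep k
        rw [Finset.sum_apply] at this
        exact this
      have hdvd := dc 𝒜 m hm.symm h2 hodd hdeg
      obtain ⟨q, hq⟩ : ∃ q, m = 4 * q + 1 ∨ m = 4 * q + 3 := ⟨m / 4, by omega⟩
      rcases hq with hq | hq
      · -- m ≡ 1 mod 4: 2m + m(m-1) ≡ 2 mod 4
        obtain ⟨t, ht⟩ := hdvd
        rw [hq] at ht
        have h1 : 4 * q + 1 - 1 = 4 * q := by omega
        rw [h1] at ht
        have h3 : 2 * (4 * q + 1) + (4 * q + 1) * (4 * q) = 4 * (4 * q * q + 3 * q) + 2 := by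
          ring
        rw [h3] at ht
        obtain ⟨r, hr⟩ : ∃ r, 4 * q * q + 3 * q = r := ⟨_, rfl⟩
        rw [hr] at ht
        omega
      · -- m ≡ 3 mod 4 ⇒ n ≡ 3 mod 4
        omega
    · -- m = n + 1
      haveI : Nonempty {x : ↥𝒜 // x ≠ i0} := by
        rw [← Fintype.card_pos_iff, hcard']; omega
      have hcardeq' : Fintype.card {x : ↥𝒜 // x ≠ i0}
          = Module.finrank (ZMod 2) (Fin n → ZMod 2) := by
        rw [hcard', hfinrank]; omega
      set Fs' : {x : ↥𝒜 // x ≠ i0} → Finset (Fin n) := fun i => Fs i.1 with hFs'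
      have hself' : ∀ i, (((Fs' i).card : ZMod 2)) = 0 := fun i => hself i.1
      have hpair' : ∀ i j, i ≠ j → (((Fs' i ∩ Fs' j).card : ZMod 2)) = 1 := fun i j hij =>
        hpair i.1 j.1 (fun e => hij (Subtype.ext e))
      have hwu' : ∀ j, ∑ k, u k * vv n (Fs' j) k = 0 := fun j => hwu j.1
      set b' := basisOfLinearIndependentOfCardEqFinrank hLI' hcardeq' with hb'
      set a' : {x : ↥𝒜 // x ≠ i0} → ZMod 2 := fun i => b'.repr u i with ha'
      have hrep' : ∑ i, a' i • vv (R := ZMod 2) n (Fs' i) = u := by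
        have hb2 : ⇑b' = fun i : {x : ↥𝒜 // x ≠ i0} => vv (R := ZMod 2) n (Fs i.1) :=
          coe_basisOfLinearIndependentOfCardEqFinrank hLI' hcardeq'
        have hbr := b'.sum_repr u
        rw [hb2] at hbr
        exact hbr
      have hkey' := key Fs' hself' hpair' u hwu' a' hrep'
      rcases zmod2_cases (∑ i, a' i) with hs0 | hs1
      · have hu0 : u = 0 := by
          rw [← hrep']
          exact Finset.sum_eq_zero fun i _ => by rw [hkey' i, hs0, zero_smul]
        exact one_ne_zero (congrFun hu0 ⟨0, hn⟩)
      · have hall : ∀ i, a' i = 1 := fun i => by rw [hkey' i, hs1]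
        have hsm' : ((m - 1 : ℕ) : ZMod 2) = 1 := by
          rw [← hs1, Finset.sum_congr rfl fun i _ => hall i, Finset.sum_const,
            Finset.card_univ, hcard', nsmul_eq_mul, mul_one]
        have : (m - 1) % 2 = 1 := odd_of_zmod2 hsm'
        omega
lemma card_symmDiff_ident {n : ℕ} (F G : Finset (Fin n)) :
    (symmDiff F G).card + 2 * (F ∩ G).card = F.card + G.card := by
  have h1 : symmDiff F G = (F \ G) ∪ (G \ F) := by
    rw [symmDiff_def]; rfl
  have h2 : ((F \ G) ∪ (G \ F)).card = (F \ G).card + (G \ F).card :=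
    Finset.card_union_of_disjoint (disjoint_sdiff_sdiff)
  have h3 : (F \ G).card + (F ∩ G).card = F.card := Finset.card_sdiff_add_card_inter F G
  have h4 : (G \ F).card + (G ∩ F).card = G.card := Finset.card_sdiff_add_card_inter G F
  rw [Finset.inter_comm G F] at h4
  rw [h1, h2]
  omega

lemma lemC {n : ℕ} (hn : 1 ≤ n) (hn3 : n % 4 ≠ 3) (𝒞 : Finset (Finset (Fin n)))
    (hD : ∀ F ∈ 𝒞, ∀ G ∈ 𝒞, F ≠ G → (symmDiff F G).card % 4 = 2) :
    𝒞.card ≤ n := by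
  classical
  rcases 𝒞.eq_empty_or_nonempty with rfl | ⟨F0, hF0⟩
  · simp
  set 𝒟 := (𝒞.erase F0).image (fun F => symmDiff F F0) with h𝒟
  have hinj : Function.Injective (fun F : Finset (Fin n) => symmDiff F F0) :=
    symmDiff_left_injective F0
  have hcard𝒟 : 𝒟.card = 𝒞.card - 1 := by
    rw [h𝒟, Finset.card_image_of_injective _ hinj, Finset.card_erase_of_mem hF0]
  have h2 : ∀ A ∈ 𝒟, A.card % 4 = 2 := by
    intro A hA
    obtain ⟨F, hF, rfl⟩ := Finset.mem_image.mp hA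
    exact hD F (Finset.mem_of_mem_erase hF) F0 hF0 (Finset.ne_of_mem_erase hF)
  have hodd : ∀ A ∈ 𝒟, ∀ B ∈ 𝒟, A ≠ B → (A ∩ B).card % 2 = 1 := by
    intro A hA B hB hAB
    obtain ⟨F, hF, rfl⟩ := Finset.mem_image.mp hA
    obtain ⟨G, hG, rfl⟩ := Finset.mem_image.mp hB
    have hFG : F ≠ G := fun e => hAB (by rw [e])
    have hDfg : (symmDiff F G).card % 4 = 2 :=
      hD F (Finset.mem_of_mem_erase hF) G (Finset.mem_of_mem_erase hG) hFG
    have hAB2 : symmDiff (symmDiff F F0) (symmDiff G F0) = symmDiff F G := by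
      rw [symmDiff_symmDiff_symmDiff_comm]
      simp
    have hid := card_symmDiff_ident (symmDiff F F0) (symmDiff G F0)
    rw [hAB2] at hid
    have hA4 : (symmDiff F F0).card % 4 = 2 := h2 _ hA
    have hB4 : (symmDiff G F0).card % 4 = 2 := h2 _ hB
    omega
  have := lemB hn hn3 𝒟 h2 hodd
  have hpos : 1 ≤ 𝒞.card := Finset.card_pos.mpr ⟨F0, hF0⟩
  omega

end EFB

/-- If `n ≥ 1` with `n ≡ 0, 1` or `2 (mod 4)` and `ℱ` is a family of subsets of
`{1,…,n}` such that the cardinality of the symmetric difference of any two distinct members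
is not a multiple of `4`, then `|ℱ| ≤ 2n`. -/
theorem extremal_family_bound_not_three_mod_four
    (n : ℕ) (hn : 1 ≤ n) (h4 : n % 4 = 0 ∨ n % 4 = 1 ∨ n % 4 = 2)
    (ℱ : Finset (Finset (Fin n)))
    (h : ∀ F ∈ ℱ, ∀ F' ∈ ℱ, F ≠ F' → ¬ (4 ∣ (symmDiff F F').card)) :
    ℱ.card ≤ 2 * n := by
  classical
  have hn3 : n % 4 ≠ 3 := by omega
  set E := ℱ.filter (fun F => F.card % 2 = 0) with hE
  set O := ℱ.filter (fun F => ¬ (F.card % 2 = 0)) with hO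
  have hsplit : E.card + O.card = ℱ.card :=
    Finset.card_filter_add_card_filter_not _
  have hclass : ∀ 𝒞 : Finset (Finset (Fin n)), 𝒞 ⊆ ℱ →
      (∀ F ∈ 𝒞, ∀ G ∈ 𝒞, F.card % 2 = G.card % 2) → 𝒞.card ≤ n := by
    intro 𝒞 hsub hpar
    refine EFB.lemC hn hn3 𝒞 ?_
    intro F hF G hG hFG
    have hnd := h F (hsub hF) G (hsub hG) hFG
    rw [Nat.dvd_iff_mod_eq_zero] at hnd
    have hid := EFB.card_symmDiff_ident F G
    have hp := hpar F hF G hG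
    omega
  have hEn : E.card ≤ n := by
    refine hclass E (Finset.filter_subset _ _) ?_
    intro F hF G hG
    have h1 := (Finset.mem_filter.mp hF).2
    have h2 := (Finset.mem_filter.mp hG).2
    omega
  have hOn : O.card ≤ n := by
    refine hclass O (Finset.filter_subset _ _) ?_
    intro F hF G hG
    have h1 := (Finset.mem_filter.mp hF).2
    have h2 := (Finset.mem_filter.mp hG).2
    omega
  omega
end

section
/- Let n ≥ 1 with n ≡ 3 (mod 4), and let ℱ be a family of subsets of {1,2,…,n} such that for every two distinct members F, F' ∈ ℱ the cardinality of the symmetric difference F ⊕ F' is not a multiple of 4. Then |ℱ| ≤ 2n + 2. -/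
open Finset

namespace ExtremalAux

variable {n : ℕ}

/-- indicator vector of a finset -/
def ind (A : Finset (Fin n)) : Fin n → ZMod 2 := fun i => if i ∈ A then 1 else 0

lemma ind_injective : Function.Injective (ind (n := n)) := by
  intro A B hAB
  ext i
  have := congrFun hAB i
  by_cases hA : i ∈ A <;> by_cases hB : i ∈ B <;> simp [ind, hA, hB] at this ⊢

lemma dot_ind (A B : Finset (Fin n)) :
    dotProduct (ind A) (ind B) = ((A ∩ B).card : ZMod 2) := by
  classical
  have h1 : ∀ i, ind A i * ind B i = if i ∈ A ∩ B then (1 : ZMod 2) else 0 := by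
    intro i
    by_cases hA : i ∈ A <;> by_cases hB : i ∈ B <;> simp [ind, hA, hB]
  rw [dotProduct]
  simp only [h1]
  rw [Finset.sum_ite_mem, Finset.univ_inter, Finset.sum_const, nsmul_eq_mul, mul_one]

lemma card_symmDiff_add (A B : Finset (Fin n)) :
    (symmDiff A B).card + 2 * (A ∩ B).card = A.card + B.card := by
  classical
  have h1 : symmDiff A B = (A ∪ B) \ (A ∩ B) := by
    rw [symmDiff_eq_sup_sdiff_inf]; rfl
  have h2 : (A ∩ B) ⊆ (A ∪ B) := (inter_subset_left).trans subset_union_left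
  have h3 : ((A ∪ B) \ (A ∩ B)).card = (A ∪ B).card - (A ∩ B).card :=
    card_sdiff_of_subset h2
  have h4 := Finset.card_union_add_card_inter A B
  have h5 : (A ∩ B).card ≤ (A ∪ B).card := card_le_card h2
  rw [h1, h3]
  omega

/-- The symmetric cancellation identity for symmDiff. -/
lemma symmDiff_cancel (A B C : Finset (Fin n)) :
    symmDiff (symmDiff A C) (symmDiff B C) = symmDiff A B := by
  rw [symmDiff_assoc]
  congr 1
  rw [symmDiff_comm B C, ← symmDiff_assoc, symmDiff_self]
  simp

section LI

variable (S : Finset (Fin n → ZMod 2))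

lemma li_aux
    (hd : ∀ u ∈ S, dotProduct u u = 0)
    (ho : ∀ u ∈ S, ∀ v ∈ S, u ≠ v → dotProduct u v = 1)
    (g : S → ZMod 2) (hg : ∑ u : S, g u • (u : Fin n → ZMod 2) = 0) :
    (∀ x : Fin n → ZMod 2,
      ∑ u : S, g u * dotProduct x (u : Fin n → ZMod 2) = 0) ∧
    (∀ v : S, g v = ∑ u : S, g u) := by
  classical
  have key : ∀ x : Fin n → ZMod 2,
      ∑ u : S, g u * dotProduct x (u : Fin n → ZMod 2) = 0 := by
    intro x
    calc ∑ u : S, g u * dotProduct x (u : Fin n → ZMod 2)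
        = ∑ u : S, dotProduct x (g u • (u : Fin n → ZMod 2)) := by
          refine Finset.sum_congr rfl fun u _ => ?_
          rw [dotProduct_smul, smul_eq_mul]
      _ = dotProduct x (∑ u : S, g u • (u : Fin n → ZMod 2)) :=
          (map_sum (AddMonoidHom.mk' (fun y => dotProduct x y)
            (fun a b => dotProduct_add x a b)) _ _).symm
      _ = 0 := by rw [hg, dotProduct_zero]
  refine ⟨key, fun v => ?_⟩
  have hv := key (v : Fin n → ZMod 2)
  have h2 : ∀ u : S, g u * dotProduct (v : Fin n → ZMod 2) (u : Fin n → ZMod 2)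
      = if u = v then 0 else g u := by
    intro u
    by_cases huv : u = v
    · subst huv; rw [hd u u.2, mul_zero, if_pos rfl]
    · rw [ho v v.2 u u.2 (fun hh => huv (Subtype.ext hh.symm)), mul_one, if_neg huv]
  rw [Finset.sum_congr rfl (fun u _ => h2 u)] at hv
  have h3 : ∑ u : S, (if u = v then (0 : ZMod 2) else g u)
      = ∑ u ∈ Finset.univ.erase v, g u := by
    rw [← Finset.add_sum_erase _ _ (Finset.mem_univ v), if_pos rfl, zero_add]
    exact Finset.sum_congr rfl (fun u hu => if_neg (Finset.ne_of_mem_erase hu))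
  rw [h3] at hv
  have h4 : g v + ∑ u ∈ Finset.univ.erase v, g u = ∑ u : S, g u :=
    Finset.add_sum_erase _ _ (Finset.mem_univ v)
  rw [hv, add_zero] at h4
  exact h4

lemma li_of_witness (w : Fin n → ZMod 2)
    (hd : ∀ u ∈ S, dotProduct u u = 0)
    (ho : ∀ u ∈ S, ∀ v ∈ S, u ≠ v → dotProduct u v = 1)
    (hw : ∀ u ∈ S, dotProduct w u = 1) :
    LinearIndependent (ZMod 2) ((↑) : S → (Fin n → ZMod 2)) := by
  classical
  rw [Fintype.linearIndependent_iff]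
  intro g hg
  obtain ⟨key, hgv⟩ := li_aux S hd ho g hg
  have hsum : ∑ u : S, g u = 0 := by
    have := key w
    have h1 : ∀ u : S, g u * dotProduct w (u : Fin n → ZMod 2) = g u := by
      intro u; rw [hw u u.2, mul_one]
    rwa [Finset.sum_congr rfl (fun u _ => h1 u)] at this
  intro v
  rw [hgv v, hsum]

lemma li_of_even (heven : S.card % 2 = 0)
    (hd : ∀ u ∈ S, dotProduct u u = 0)
    (ho : ∀ u ∈ S, ∀ v ∈ S, u ≠ v → dotProduct u v = 1) :
    LinearIndependent (ZMod 2) ((↑) : S → (Fin n → ZMod 2)) := by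
  classical
  rw [Fintype.linearIndependent_iff]
  intro g hg
  obtain ⟨key, hgv⟩ := li_aux S hd ho g hg
  have h2 : (S.card : ZMod 2) = 0 := by
    rw [ZMod.natCast_eq_zero_iff]
    omega
  have h1 : ∑ u : S, g u = 0 := by
    calc ∑ v : S, g v
        = ∑ _v : S, ∑ u : S, g u := Finset.sum_congr rfl (fun v _ => hgv v)
      _ = (Fintype.card {x // x ∈ S} : ZMod 2) * ∑ u : S, g u := by
          rw [Finset.sum_const, nsmul_eq_mul, Finset.card_univ]
      _ = (S.card : ZMod 2) * ∑ u : S, g u := by rw [Fintype.card_coe]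
      _ = 0 := by rw [h2, zero_mul]
  intro v
  rw [hgv v, h1]

lemma card_le_of_odd (hnodd : n % 2 = 1)
    (hd : ∀ u ∈ S, dotProduct u u = 0)
    (ho : ∀ u ∈ S, ∀ v ∈ S, u ≠ v → dotProduct u v = 1) :
    S.card ≤ n := by
  classical
  have hrank : Module.finrank (ZMod 2) (Fin n → ZMod 2) = n := by
    simp [Module.finrank_pi]
  by_cases heven : S.card % 2 = 0
  · have := (li_of_even S heven hd ho).finset_card_le_finrank
    rwa [hrank] at this
  · -- S.card odd, so S is nonempty; erase one element which serves as witness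
    have hpos : 0 < S.card := by omega
    obtain ⟨w, hw⟩ := Finset.card_pos.mp hpos
    set S' := S.erase w with hS'
    have hsub : S' ⊆ S := Finset.erase_subset _ _
    have hli : LinearIndependent (ZMod 2) ((↑) : S' → (Fin n → ZMod 2)) := by
      apply li_of_witness S' w
      · exact fun u hu => hd u (hsub hu)
      · exact fun u hu v hv huv => ho u (hsub hu) v (hsub hv) huv
      · intro u hu
        rw [dotProduct_comm]
        exact ho u (hsub hu) w hw (Finset.ne_of_mem_erase hu)
    have h1 := hli.finset_card_le_finrank
    rw [hrank] at h1
    have h2 : S'.card = S.card - 1 := Finset.card_erase_of_mem hw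
    omega

end LI

/-- Bound for a single parity class. -/
lemma class_bound (hnodd : n % 2 = 1) (C : Finset (Finset (Fin n)))
    (hpar : ∀ F ∈ C, ∀ G ∈ C, F.card % 2 = G.card % 2)
    (h : ∀ F ∈ C, ∀ G ∈ C, F ≠ G → ¬ (4 ∣ (symmDiff F G).card)) :
    C.card ≤ n + 1 := by
  classical
  rcases C.eq_empty_or_nonempty with hC | ⟨F₀, hF₀⟩
  · simp [hC]
  -- key fact: pairwise symmetric differences are ≡ 2 mod 4
  have hmod : ∀ F ∈ C, ∀ G ∈ C, F ≠ G → (symmDiff F G).card % 4 = 2 := by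
    intro F hF G hG hFG
    have h1 := card_symmDiff_add F G
    have h2 := hpar F hF G hG
    have h3 := h F hF G hG hFG
    rw [Nat.dvd_iff_mod_eq_zero] at h3
    omega
  set S := (C.erase F₀).image (fun F => ind (symmDiff F F₀)) with hS
  have hinj : ∀ F ∈ C.erase F₀, ∀ G ∈ C.erase F₀,
      ind (symmDiff F F₀) = ind (symmDiff G F₀) → F = G := by
    intro F _ G _ hFG
    have := ind_injective hFG
    exact symmDiff_left_injective F₀ this
  have hcard : S.card = C.card - 1 := by
    rw [hS, Finset.card_image_of_injOn hinj, Finset.card_erase_of_mem hF₀]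
  -- verify dot product conditions
  have hd : ∀ u ∈ S, dotProduct u u = 0 := by
    intro u hu
    rw [hS, Finset.mem_image] at hu
    obtain ⟨F, hF, rfl⟩ := hu
    rw [dot_ind, Finset.inter_self]
    rw [ZMod.natCast_eq_zero_iff]
    have h1 := hmod F (Finset.mem_of_mem_erase hF) F₀ hF₀ (Finset.ne_of_mem_erase hF)
    omega
  have ho : ∀ u ∈ S, ∀ v ∈ S, u ≠ v → dotProduct u v = 1 := by
    intro u hu v hv huv
    rw [hS, Finset.mem_image] at hu hv
    obtain ⟨F, hF, rfl⟩ := hu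
    obtain ⟨G, hG, rfl⟩ := hv
    have hFG : F ≠ G := fun hh => huv (by rw [hh])
    rw [dot_ind]
    -- compute the cardinality of the intersection mod 2
    have h1 := card_symmDiff_add (symmDiff F F₀) (symmDiff G F₀)
    rw [symmDiff_cancel] at h1
    have h2 := hmod F (Finset.mem_of_mem_erase hF) G (Finset.mem_of_mem_erase hG) hFG
    have h3 := hmod F (Finset.mem_of_mem_erase hF) F₀ hF₀ (Finset.ne_of_mem_erase hF)
    have h4 := hmod G (Finset.mem_of_mem_erase hG) F₀ hF₀ (Finset.ne_of_mem_erase hG)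
    have h5 : (symmDiff F F₀ ∩ symmDiff G F₀).card % 2 = 1 := by omega
    have h6 : ((symmDiff F F₀ ∩ symmDiff G F₀).card : ZMod 2)
        = (((symmDiff F F₀ ∩ symmDiff G F₀).card % 2 : ℕ) : ZMod 2) :=
      (ZMod.natCast_mod _ 2).symm
    rw [h6, h5, Nat.cast_one]
  have := card_le_of_odd S hnodd hd ho
  omega

end ExtremalAux

/-- If `n ≥ 1` with `n ≡ 3 (mod 4)` and `ℱ` is a family of subsets of
`{1,…,n}` such that the cardinality of the symmetric difference of any two distinct members
is not a multiple of `4`, then `|ℱ| ≤ 2n + 2`. -/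
theorem extremal_family_bound_three_mod_four
    (n : ℕ) (hn : 1 ≤ n) (h4 : n % 4 = 3)
    (ℱ : Finset (Finset (Fin n)))
    (h : ∀ F ∈ ℱ, ∀ F' ∈ ℱ, F ≠ F' → ¬ (4 ∣ (symmDiff F F').card)) :
    ℱ.card ≤ 2 * n + 2 := by
  classical
  have hnodd : n % 2 = 1 := by omega
  set ℱe := ℱ.filter (fun F => F.card % 2 = 0) with hℱe
  set ℱo := ℱ.filter (fun F => ¬ (F.card % 2 = 0)) with hℱo
  have hsplit : ℱe.card + ℱo.card = ℱ.card :=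
    Finset.card_filter_add_card_filter_not _
  have he : ℱe.card ≤ n + 1 := by
    apply ExtremalAux.class_bound hnodd
    · intro F hF G hG
      rw [hℱe, Finset.mem_filter] at hF hG
      omega
    · intro F hF G hG hFG
      rw [hℱe, Finset.mem_filter] at hF hG
      exact h F hF.1 G hG.1 hFG
  have hodd : ℱo.card ≤ n + 1 := by
    apply ExtremalAux.class_bound hnodd
    · intro F hF G hG
      rw [hℱo, Finset.mem_filter] at hF hG
      omega
    · intro F hF G hG hFG
      rw [hℱo, Finset.mem_filter] at hF hG
      exact h F hF.1 G hG.1 hFG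
  omega
end

section
/- For every n ≥ 1 there exists a family ℱ of 2n distinct subsets of {1,2,…,n} such that for every two distinct members F, F' ∈ ℱ the cardinality of F ⊕ F' is not a multiple of 4; moreover, if n ≡ 3 (mod 4), there exists such a family with 2n + 2 members. (Sharpness of the bounds in the main theorem.) -/
open Finset
open scoped symmDiff

/-- Two distinct "small" sets (card ≤ 2, and containing `a` if card = 2) have
symmetric difference of cardinality 1, 2 or 3, hence not divisible by 4. -/
lemma aux_small_symmDiff {n : ℕ} (a : Fin n) (A B : Finset (Fin n))
    (hA1 : A.card ≤ 2) (hA2 : A.card = 2 → a ∈ A)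
    (hB1 : B.card ≤ 2) (hB2 : B.card = 2 → a ∈ B)
    (hne : A ≠ B) : ¬ (4 ∣ (A ∆ B).card) := by
  have hpos : 0 < (A ∆ B).card := by
    rw [Finset.card_pos]
    rcases Finset.eq_empty_or_nonempty (A ∆ B) with h | h
    · exact absurd (symmDiff_eq_bot.mp h) hne
    · exact h
  have hle : (A ∆ B).card ≤ 3 := by
    by_cases h2 : A.card = 2 ∧ B.card = 2
    · have haA : a ∈ A := hA2 h2.1
      have haB : a ∈ B := hB2 h2.2
      have hsub : A ∆ B ⊆ (A ∪ B).erase a := by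
        rw [Finset.subset_erase]
        refine ⟨symmDiff_le_sup, ?_⟩
        rw [Finset.mem_symmDiff]
        rintro (⟨-, h⟩ | ⟨-, h⟩) <;> [exact h haB; exact h haA]
      calc (A ∆ B).card ≤ ((A ∪ B).erase a).card := Finset.card_le_card hsub
        _ = (A ∪ B).card - 1 :=
            Finset.card_erase_of_mem (Finset.mem_union_left _ haA)
        _ ≤ (A.card + B.card) - 1 := by
            have := Finset.card_union_le A B; omega
        _ ≤ 3 := by omega
    · have h3 : A.card + B.card ≤ 3 := by omega
      calc (A ∆ B).card ≤ (A ∪ B).card := Finset.card_le_card symmDiff_le_sup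
        _ ≤ A.card + B.card := Finset.card_union_le A B
        _ ≤ 3 := h3
  intro hd
  have := Nat.le_of_dvd hpos hd
  omega

lemma aux_symmDiff_singleton_mem {n : ℕ} (a : Fin n) (s : Finset (Fin n)) (h : a ∈ s) :
    ({a} : Finset (Fin n)) ∆ s = s.erase a := by
  ext x; simp only [Finset.mem_symmDiff, Finset.mem_erase, Finset.mem_singleton]
  by_cases hx : x = a <;> simp [hx, h]

lemma aux_symmDiff_singleton_not_mem {n : ℕ} (a : Fin n) (s : Finset (Fin n)) (h : a ∉ s) :
    ({a} : Finset (Fin n)) ∆ s = insert a s := by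
  ext x; simp only [Finset.mem_symmDiff, Finset.mem_insert, Finset.mem_singleton]
  by_cases hx : x = a <;> simp [hx, h]

lemma aux_card_univ_symmDiff {n : ℕ} (G : Finset (Fin n)) :
    ((Finset.univ : Finset (Fin n)) ∆ G).card = n - G.card := by
  have : (Finset.univ : Finset (Fin n)) ∆ G = Gᶜ := by
    rw [symmDiff_comm]
    exact symmDiff_top G
  rw [this, Finset.card_compl, Fintype.card_fin]

/-- Sharpness of the bounds of the main theorem: for every `n ≥ 1` there is a
family of `2n` distinct subsets of `{1,…,n}` whose pairwise symmetric differences have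
cardinality not a multiple of `4`; if moreover `n ≡ 3 (mod 4)`, there is such a family
with `2n + 2` members. -/
theorem extremal_family_bound_sharp (n : ℕ) (hn : 1 ≤ n) :
    (∃ ℱ : Finset (Finset (Fin n)), ℱ.card = 2 * n ∧
      ∀ F ∈ ℱ, ∀ F' ∈ ℱ, F ≠ F' → ¬ (4 ∣ (symmDiff F F').card)) ∧
    (n % 4 = 3 → ∃ ℱ : Finset (Finset (Fin n)), ℱ.card = 2 * n + 2 ∧
      ∀ F ∈ ℱ, ∀ F' ∈ ℱ, F ≠ F' → ¬ (4 ∣ (symmDiff F F').card)) := by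
  have a : Fin n := ⟨0, hn⟩
  -- the base family: ∅, all singletons, all pairs containing a
  set S : Finset (Finset (Fin n)) :=
    Finset.univ.image (fun i => ({i} : Finset (Fin n))) with hS
  set P : Finset (Finset (Fin n)) :=
    (Finset.univ.erase a).image (fun i => ({i, a} : Finset (Fin n))) with hP
  set ℱ₀ : Finset (Finset (Fin n)) := insert ∅ (S ∪ P) with hF0
  -- every member is small
  have hsmall : ∀ F ∈ ℱ₀, F.card ≤ 2 ∧ (F.card = 2 → a ∈ F) := by
    intro F hF
    rw [hF0, Finset.mem_insert, Finset.mem_union] at hF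
    rcases hF with rfl | hF | hF
    · simp
    · obtain ⟨i, -, rfl⟩ := Finset.mem_image.mp hF
      simp
    · obtain ⟨i, hi, rfl⟩ := Finset.mem_image.mp hF
      refine ⟨?_, fun _ => by simp⟩
      calc ({i, a} : Finset (Fin n)).card ≤ ({a} : Finset (Fin n)).card + 1 :=
            Finset.card_insert_le i {a}
        _ = 2 := by simp
  have hScard : S.card = n := by
    rw [hS, Finset.card_image_of_injective _ Finset.singleton_injective,
      Finset.card_univ, Fintype.card_fin]
  have hPcard : P.card = n - 1 := by
    rw [hP, Finset.card_image_of_injOn, Finset.card_erase_of_mem (Finset.mem_univ a),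
      Finset.card_univ, Fintype.card_fin]
    intro i hi j hj hij
    have hi' : i ≠ a := (Finset.mem_erase.mp hi).1
    have hij' : ({i, a} : Finset (Fin n)) = {j, a} := hij
    have : i ∈ ({j, a} : Finset (Fin n)) := hij' ▸ Finset.mem_insert_self i {a}
    simp only [Finset.mem_insert, Finset.mem_singleton] at this
    tauto
  have hcardP2 : ∀ F ∈ P, F.card = 2 := by
    intro F hF
    obtain ⟨i, hi, rfl⟩ := Finset.mem_image.mp hF
    have hi' : i ≠ a := (Finset.mem_erase.mp hi).1
    rw [Finset.card_insert_of_notMem (by simpa using hi')]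
    simp
  have hcardS1 : ∀ F ∈ S, F.card = 1 := by
    intro F hF
    obtain ⟨i, -, rfl⟩ := Finset.mem_image.mp hF
    simp
  have hdisj : Disjoint S P := by
    rw [Finset.disjoint_left]
    intro F hFS hFP
    have := hcardS1 F hFS
    have := hcardP2 F hFP
    omega
  have hempty : (∅ : Finset (Fin n)) ∉ S ∪ P := by
    rw [Finset.mem_union]
    rintro (h | h)
    · have := hcardS1 _ h; simp at this
    · have := hcardP2 _ h; simp at this
  have hcard0 : ℱ₀.card = 2 * n := by
    rw [hF0, Finset.card_insert_of_notMem hempty,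
      Finset.card_union_of_disjoint hdisj, hScard, hPcard]
    omega
  have hgood0 : ∀ F ∈ ℱ₀, ∀ F' ∈ ℱ₀, F ≠ F' → ¬ (4 ∣ (symmDiff F F').card) := by
    intro F hF F' hF' hne
    obtain ⟨h1, h2⟩ := hsmall F hF
    obtain ⟨h1', h2'⟩ := hsmall F' hF'
    exact aux_small_symmDiff a F F' h1 h2 h1' h2' hne
  refine ⟨⟨ℱ₀, hcard0, hgood0⟩, ?_⟩
  -- second part: n ≡ 3 (mod 4)
  intro h4
  have hn3 : 3 ≤ n := by omega
  set U : Finset (Fin n) := Finset.univ with hU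
  set E : Finset (Fin n) := Finset.univ.erase a with hE
  have hUcard : U.card = n := by rw [hU, Finset.card_univ, Fintype.card_fin]
  have hEcard : E.card = n - 1 := by
    rw [hE, Finset.card_erase_of_mem (Finset.mem_univ a), Finset.card_univ, Fintype.card_fin]
  -- key: symmetric difference with the universe
  have key : ∀ G : Finset (Fin n), G.card ≤ 2 → ¬ (4 ∣ (U ∆ G).card) := by
    intro G hG hd
    rw [hU, aux_card_univ_symmDiff] at hd
    omega
  -- key2: symmetric difference with E = univ.erase a
  have key2 : ∀ G : Finset (Fin n), G.card ≤ 2 → (G.card = 2 → a ∈ G) →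
      ¬ (4 ∣ (E ∆ G).card) := by
    intro G hG1 hG2 hd
    have hEU : E = U ∆ ({a} : Finset (Fin n)) := by
      ext x
      simp only [hE, hU, Finset.mem_symmDiff, Finset.mem_erase, Finset.mem_univ,
        Finset.mem_singleton, and_true, true_and]
      tauto
    rw [hEU, symmDiff_assoc] at hd
    have hcard : (({a} : Finset (Fin n)) ∆ G).card ≤ 2 := by
      by_cases ha : a ∈ G
      · rw [aux_symmDiff_singleton_mem a G ha]
        calc (G.erase a).card ≤ G.card := Finset.card_le_card (Finset.erase_subset a G)
          _ ≤ 2 := hG1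
      · rw [aux_symmDiff_singleton_not_mem a G ha]
        have hG1' : G.card ≤ 1 := by
          rcases Nat.lt_or_ge G.card 2 with h | h
          · omega
          · exact absurd (hG2 (by omega)) ha
        calc (insert a G).card ≤ G.card + 1 := Finset.card_insert_le a G
          _ ≤ 2 := by omega
    rw [hU, aux_card_univ_symmDiff] at hd
    omega
  -- the extended family
  have hUE : U ≠ E := by
    intro h
    have : a ∈ E := h ▸ Finset.mem_univ a
    exact (Finset.notMem_erase a Finset.univ) this
  have hEnot : E ∉ ℱ₀ := by
    intro h
    obtain ⟨h1, h2⟩ := hsmall E h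
    rw [hEcard] at h1 h2
    have : n - 1 = 2 := by omega
    exact (Finset.notMem_erase a Finset.univ) (h2 this)
  have hUnot : U ∉ ℱ₀ := by
    intro h
    obtain ⟨h1, -⟩ := hsmall U h
    rw [hUcard] at h1
    omega
  have hUnot' : U ∉ insert E ℱ₀ := by
    rw [Finset.mem_insert]
    rintro (h | h) <;> [exact hUE h; exact hUnot h]
  refine ⟨insert U (insert E ℱ₀), ?_, ?_⟩
  · rw [Finset.card_insert_of_notMem hUnot', Finset.card_insert_of_notMem hEnot, hcard0]
  · intro F hF F' hF' hne
    rw [Finset.mem_insert, Finset.mem_insert] at hF hF'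
    have hUEd : ¬ (4 ∣ (U ∆ E).card) := by
      rw [hU, aux_card_univ_symmDiff, hEcard]
      omega
    rcases hF with rfl | rfl | hF <;> rcases hF' with rfl | rfl | hF'
    · exact absurd rfl hne
    · exact hUEd
    · exact key F' (hsmall F' hF').1
    · rw [symmDiff_comm]; exact hUEd
    · exact absurd rfl hne
    · exact key2 F' (hsmall F' hF').1 (hsmall F' hF').2
    · rw [symmDiff_comm]; exact key F (hsmall F hF).1
    · rw [symmDiff_comm]; exact key2 F (hsmall F hF).1 (hsmall F hF).2
    · exact hgood0 F hF F' hF' hne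
end

section
/- Let α : 𝔽₂ⁿ → 𝔽₂ be a cubic form and A ⊆ 𝔽₂ⁿ a subset such that for every two distinct elements x, x' ∈ A one has α(x + x') = 1. Then |A| ≤ ρ(2ⁿ), where ρ is the Hurwitz–Radon function: ρ(2ⁿ) = 2n+1 if n ≡ 0 (mod 4), ρ(2ⁿ) = 2n if n ≡ 1 or 2 (mod 4), and ρ(2ⁿ) = 2n+2 if n ≡ 3 (mod 4). -/
/-!
Translate `A` so that it contains `0` and drop `0`: the remaining set `S` satisfies `α = 1` on `S`
and `polar α = 1` on distinct pairs of `S`. The polar of a cubic form splits as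
`ℓ(x, y) + ℓ(y, x)` with `ℓ(x, ·)` linear and `ℓ(x, x) = α x`, so `x ↦ (x, ℓ(x, ·))` carries `S`
injectively into the hyperbolic quadratic space `𝔽₂ⁿ ⊕ (𝔽₂ⁿ)*` of dimension `2n`, onto a set `T`
on which the quadratic form `Q` is `1` and its polar is `1` on distinct pairs.

In such a set `polar Q (∑ U) w = |U \ {w}|` for `w ∈ T`, so a nonempty subset `U` with zero sum
is all of `T`, of odd size; hence subset sums of proper subsets of `T` are distinct and
`|T| ≤ 2n + 1`. Moreover `Q (∑ U) = C(|U| + 1, 2)`. If `|T| = 2n + 1`, then `∑ T = 0`, which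
forces `C(2n + 2, 2)` to be even: impossible for `n` even. If `|T| ≥ 2n`, the subset sums of
`2n` elements of `T` enumerate the whole space, and evaluating `∑ (-1)^Q` both ways gives
`2ⁿ = Re (1 + i)^(2n+1) = (-1)^C(n+1,2) 2ⁿ`: impossible for `n ≡ 1, 2 (mod 4)`.
-/

/-- A cubic form on `𝔽₂ⁿ`: a function of the form
`α(x) = Σ_{1 ≤ i ≤ j ≤ k ≤ n} α_{ijk} x_i x_j x_k` with coefficients in `𝔽₂`. -/
def IsCubicForm {n : ℕ} (α : (Fin n → ZMod 2) → ZMod 2) : Prop :=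
  ∃ c : Fin n → Fin n → Fin n → ZMod 2,
    ∀ x, α x = ∑ i, ∑ j, ∑ k, if i ≤ j ∧ j ≤ k then c i j k * x i * x j * x k else 0

/-- The Hurwitz–Radon function evaluated at `2ⁿ`, as a function of `n`:
`ρ(2ⁿ) = 2n+1` if `n ≡ 0 (mod 4)`, `ρ(2ⁿ) = 2n` if `n ≡ 1, 2 (mod 4)`,
`ρ(2ⁿ) = 2n+2` if `n ≡ 3 (mod 4)`. -/
def hurwitzRadonPow2 (n : ℕ) : ℕ :=
  if n % 4 = 0 then 2 * n + 1
  else if n % 4 = 3 then 2 * n + 2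
  else 2 * n

open Finset QuadraticMap Complex
open scoped symmDiff

theorem Finset.sum_univ_eq_sum_powerset_of_injOn {V M : Type*} [AddCommMonoid V] [Fintype V]
    [AddCommMonoid M] {T : Finset V}
    (hinj : Set.InjOn (fun U => ∑ x ∈ U, x) (T.powerset : Set (Finset V)))
    (hcard : Fintype.card V = 2 ^ #T) (f : V → M) :
    ∑ v, f v = ∑ U ∈ T.powerset, f (∑ x ∈ U, x) := by
  classical
  rw [← sum_image hinj]
  congr
  exact (eq_univ_of_card _ (by rw [card_image_of_injOn hinj, card_powerset, hcard])).symm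

theorem QuadraticMap.polar_sum_left {R M N ι : Type*} [CommRing R] [AddCommGroup M] [Module R M]
    [AddCommGroup N] [Module R N] (Q : QuadraticMap R M N) (s : Finset ι) (f : ι → M) (y : M) :
    polar Q (∑ i ∈ s, f i) y = ∑ i ∈ s, polar Q (f i) y := by
  have := map_sum (Q.polarBilin.flip y) f s
  simp only [LinearMap.flip_apply, polarBilin_apply_apply] at this
  exact this

theorem Nat.odd_choose_two_succ_iff (m : ℕ) :
    Odd ((m + 1).choose 2) ↔ m % 4 = 1 ∨ m % 4 = 2 := by
  induction m with
  | zero => simp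
  | succ m ih =>
    have h : (m + 2).choose 2 = (m + 1).choose 2 + (m + 1) := by
      rw [Nat.choose_succ_succ', Nat.choose_one_right, add_comm]
    rw [h, Nat.odd_add, ih, Nat.even_iff]
    omega

theorem Complex.one_add_I_mul_I_pow (s : ℕ) :
    (1 + I) * I ^ s = ⟨(-1) ^ (s + 1).choose 2, (-1) ^ s.choose 2⟩ := by
  induction s with
  | zero => apply Complex.ext <;> simp
  | succ s ih =>
    have h₁ : (s + 1).choose 2 = s.choose 2 + s := by
      rw [Nat.choose_succ_succ', Nat.choose_one_right, add_comm]
    have h₂ : (s + 2).choose 2 = s.choose 2 + 2 * s + 1 := by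
      rw [Nat.choose_succ_succ', Nat.choose_one_right, h₁]
      ring
    rw [pow_succ, ← mul_assoc, ih]
    apply Complex.ext <;> simp [h₁, h₂, pow_add, pow_mul]

theorem Complex.one_add_I_pow_two_mul_add_one (n : ℕ) :
    (1 + I) ^ (2 * n + 1) = 2 ^ n * ((1 + I) * I ^ n) := by
  have hsq : (1 + I) ^ 2 = 2 * I := by
    ring_nf
    rw [I_sq]
    ring
  rw [pow_succ, pow_mul, hsq, mul_pow]
  ring

theorem Finset.sum_powerset_neg_one_pow_choose_two {α : Type*} (s : Finset α) :
    ∑ t ∈ s.powerset, ((-1) ^ (#t + 1).choose 2 : ℝ) = ((1 + I) ^ (#s + 1)).re := by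
  rw [pow_succ', add_comm 1 I, ← sum_pow_mul_eq_add_pow I 1 s, mul_sum, re_sum]
  refine sum_congr rfl fun t _ => ?_
  rw [one_pow, mul_one, add_comm I 1, one_add_I_mul_I_pow]

def signChar : AddChar (ZMod 2) ℤ := AddChar.zmodChar 2 (ζ := -1) (by norm_num)

theorem signChar_natCast (k : ℕ) : signChar k = (-1) ^ k := AddChar.zmodChar_apply' _ k

section PairwisePolarOne

variable {V : Type*} [AddCommGroup V] [Module (ZMod 2) V] {Q : QuadraticForm (ZMod 2) V}
  {T U : Finset V}

theorem polar_self_zmod_two (x : V) : polar Q x x = 0 := by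
  rw [polar_self, two_nsmul, ZModModule.add_self]

theorem ZModModule.sum_symmDiff {ι : Type*} [DecidableEq ι] (f : ι → V) (s t : Finset ι) :
    ∑ i ∈ s ∆ t, f i = ∑ i ∈ s, f i + ∑ i ∈ t, f i := by
  rw [symmDiff_eq_sup_sdiff_inf, ← sum_union_inter,
    ← sum_sdiff (s₁ := s ∩ t) (s₂ := s ∪ t) inter_subset_union, add_assoc,
    ZModModule.add_self, add_zero]
  rfl

variable (hT : (T : Set V).Pairwise fun x y => polar Q x y = 1)
include hT

theorem polar_sum_eq_card_erase [DecidableEq V] (hU : U ⊆ T) {w : V} (hw : w ∈ T) :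
    polar Q (∑ x ∈ U, x) w = #(U.erase w) := by
  rw [polar_sum_left, ← sum_erase (f := fun x => polar Q x w) _ (polar_self_zmod_two w),
    card_eq_sum_ones, Nat.cast_sum]
  refine sum_congr rfl fun x hx => ?_
  rw [hT (hU (mem_of_mem_erase hx)) hw (ne_of_mem_erase hx), Nat.cast_one]

theorem eq_and_odd_of_sum_eq_zero (hU : U ⊆ T) (hne : U.Nonempty) (hsum : ∑ x ∈ U, x = 0) :
    U = T ∧ Odd #T := by
  classical
  have even_card_erase (w : V) (hw : w ∈ T) : Even #(U.erase w) := by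
    rw [← ZMod.natCast_eq_zero_iff_even, ← polar_sum_eq_card_erase hT hU hw, hsum,
      polar_zero_left]
  obtain ⟨s, hs⟩ := hne
  have hodd : Odd #U := by
    have h₁ := even_card_erase s (hU hs)
    rw [card_erase_of_mem hs, Nat.even_iff] at h₁
    have h₂ := card_pos.2 ⟨s, hs⟩
    rw [Nat.odd_iff]
    omega
  have hUT : U = T := by
    refine hU.antisymm fun w hw => ?_
    by_contra hwU
    have := even_card_erase w hw
    rw [erase_eq_of_notMem hwU] at this
    exact Nat.not_even_iff_odd.2 hodd this
  exact ⟨hUT, hUT ▸ hodd⟩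

theorem symmDiff_eq_and_odd_of_sum_eq [DecidableEq V] {U₁ U₂ : Finset V} (h₁ : U₁ ⊆ T)
    (h₂ : U₂ ⊆ T) (hne : U₁ ≠ U₂) (hsum : ∑ x ∈ U₁, x = ∑ x ∈ U₂, x) :
    U₁ ∆ U₂ = T ∧ Odd #T := by
  refine eq_and_odd_of_sum_eq_zero hT ?_ (symmDiff_nonempty.2 hne) ?_
  · exact (symmDiff_le_sup (a := U₁) (b := U₂)).trans (union_subset h₁ h₂)
  · rw [ZModModule.sum_symmDiff, hsum, ZModModule.add_self]

theorem injOn_sum_powerset {T' : Finset V} (hT' : T' ⊆ T) (h : T' ≠ T ∨ Even #T) :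
    Set.InjOn (fun U => ∑ x ∈ U, x) (T'.powerset : Set (Finset V)) := by
  classical
  intro U₁ h₁ U₂ h₂ hsum
  by_contra hne
  rw [coe_powerset, Set.mem_preimage, Set.mem_powerset_iff, coe_subset] at h₁ h₂
  obtain ⟨hUT, hodd⟩ := symmDiff_eq_and_odd_of_sum_eq hT (h₁.trans hT') (h₂.trans hT') hne hsum
  refine h.elim (fun hT'T => hT'T (hT'.antisymm ?_)) (Nat.not_even_iff_odd.2 hodd)
  exact hUT ▸ (symmDiff_le_sup (a := U₁) (b := U₂)).trans (union_subset h₁ h₂)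

theorem two_pow_card_sub_one_le_card [Fintype V] : 2 ^ (#T - 1) ≤ Fintype.card V := by
  classical
  obtain rfl | ⟨t, ht⟩ := T.eq_empty_or_nonempty
  · exact Fintype.card_pos
  rw [← card_erase_of_mem ht, ← card_powerset, ← card_univ]
  refine card_le_card_of_injOn _ (fun _ _ => mem_coe.2 (mem_univ _))
    (injOn_sum_powerset hT (erase_subset t T) (Or.inl fun h => ?_))
  exact notMem_erase t T (h.symm ▸ ht)

theorem sum_eq_zero_of_card_lt [Fintype V] (hcard : Fintype.card V < 2 ^ #T) :
    ∑ x ∈ T, x = 0 := by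
  classical
  rw [← card_powerset, ← card_univ] at hcard
  obtain ⟨U₁, h₁, U₂, h₂, hne, hsum⟩ :=
    exists_ne_map_eq_of_card_lt_of_maps_to hcard (f := fun U => ∑ x ∈ U, x)
      fun _ _ => mem_coe.2 (mem_univ _)
  rw [mem_powerset] at h₁ h₂
  rw [← (symmDiff_eq_and_odd_of_sum_eq hT h₁ h₂ hne hsum).1, ZModModule.sum_symmDiff, hsum,
    ZModModule.add_self]

variable (hQ : ∀ x ∈ T, Q x = 1)
include hQ

theorem map_sum_eq_choose (hU : U ⊆ T) : Q (∑ x ∈ U, x) = ((#U + 1).choose 2 : ℕ) := by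
  classical
  induction U using Finset.induction_on with
  | empty => simp
  | insert a U ha ih =>
    have haT := hU (mem_insert_self a U)
    have hUT := (subset_insert a U).trans hU
    rw [sum_insert ha, QuadraticMap.map_add (⇑Q), ih hUT, hQ a haT, polar_comm,
      polar_sum_eq_card_erase hT hUT haT, erase_eq_of_notMem ha, card_insert_of_notMem ha,
      Nat.choose_succ_succ' (#U + 1), Nat.choose_one_right]
    push_cast
    ring

theorem sum_signChar_eq_re_one_add_I_pow [Fintype V] {T' : Finset V} (hT' : T' ⊆ T)
    (h : T' ≠ T ∨ Even #T) (hcard : Fintype.card V = 2 ^ #T') :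
    ((∑ v, signChar (Q v) : ℤ) : ℝ) = ((1 + I) ^ (#T' + 1)).re := by
  rw [sum_univ_eq_sum_powerset_of_injOn (injOn_sum_powerset hT hT' h) hcard,
    ← Finset.sum_powerset_neg_one_pow_choose_two, Int.cast_sum]
  refine sum_congr rfl fun U hU => ?_
  rw [map_sum_eq_choose hT hQ ((mem_powerset.1 hU).trans hT'), signChar_natCast]
  push_cast
  rfl

end PairwisePolarOne

def hyperbolicForm (R ι : Type*) [CommRing R] [Fintype ι] : QuadraticForm R (ι → R × R) :=
  QuadraticMap.pi fun _ => linMulLin (LinearMap.fst R R R) (LinearMap.snd R R R)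

section HyperbolicForm

variable {R ι : Type*} [CommRing R] [Fintype ι]

theorem hyperbolicForm_apply (w : ι → R × R) :
    hyperbolicForm R ι w = ∑ i, (w i).1 * (w i).2 := by
  simp [hyperbolicForm, pi_apply, linMulLin_apply]

theorem polar_hyperbolicForm (v w : ι → R × R) :
    polar (hyperbolicForm R ι) v w = ∑ i, ((v i).1 * (w i).2 + (w i).1 * (v i).2) := by
  simp only [polar, hyperbolicForm_apply, ← sum_sub_distrib]
  refine sum_congr rfl fun i _ => ?_
  simp only [Pi.add_apply, Prod.fst_add, Prod.snd_add]
  ring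

variable (ι) [DecidableEq ι]

theorem Fintype.card_fun_zmod_two_prod :
    Fintype.card (ι → ZMod 2 × ZMod 2) = 2 ^ (2 * Fintype.card ι) := by
  simp [pow_mul]

theorem sum_signChar_hyperbolicForm :
    ∑ w : ι → ZMod 2 × ZMod 2, signChar (hyperbolicForm (ZMod 2) ι w) = 2 ^ Fintype.card ι := by
  have map_sum (f : ι → ZMod 2) : signChar (∑ i, f i) = ∏ i, signChar (f i) :=
    map_prod signChar.toMonoidHom (fun i => Multiplicative.ofAdd (f i)) univ
  simp_rw [hyperbolicForm_apply, map_sum]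
  rw [← Fintype.prod_sum fun _ (p : ZMod 2 × ZMod 2) => signChar (p.1 * p.2)]
  have hplane : ∑ p : ZMod 2 × ZMod 2, signChar (p.1 * p.2) = 2 := by decide
  simp [hplane]

end HyperbolicForm

section HyperbolicBounds

variable {ι : Type*} [Fintype ι] [DecidableEq ι] {T : Finset (ι → ZMod 2 × ZMod 2)}
  (hT : (T : Set (ι → ZMod 2 × ZMod 2)).Pairwise fun x y =>
    polar (hyperbolicForm (ZMod 2) ι) x y = 1)
include hT

theorem card_le_two_mul_add_one : #T ≤ 2 * Fintype.card ι + 1 := by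
  have h := two_pow_card_sub_one_le_card hT
  rw [Fintype.card_fun_zmod_two_prod, Nat.pow_le_pow_iff_right (by norm_num)] at h
  omega

variable (hQ : ∀ x ∈ T, hyperbolicForm (ZMod 2) ι x = 1)
include hQ

theorem card_le_two_mul_of_even (hm : Even (Fintype.card ι)) : #T ≤ 2 * Fintype.card ι := by
  by_contra! hlt
  have hcard : #T = 2 * Fintype.card ι + 1 := le_antisymm (card_le_two_mul_add_one hT) hlt
  have hsum := sum_eq_zero_of_card_lt hT
    (by rw [Fintype.card_fun_zmod_two_prod, hcard]; exact Nat.pow_lt_pow_succ (by norm_num))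
  have hchoose := map_sum_eq_choose hT hQ (subset_refl T)
  rw [hsum, QuadraticMap.map_zero, eq_comm, ZMod.natCast_eq_zero_iff_even] at hchoose
  refine Nat.not_even_iff_odd.2 ((Nat.odd_choose_two_succ_iff _).2 ?_) hchoose
  obtain ⟨k, hk⟩ := hm
  omega

theorem card_lt_two_mul (hm : Fintype.card ι % 4 = 1 ∨ Fintype.card ι % 4 = 2) :
    #T < 2 * Fintype.card ι := by
  by_contra! hle
  obtain ⟨T', hT', hcard'⟩ := exists_subset_card_eq hle
  have hproper : T' ≠ T ∨ Even #T := by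
    by_cases h : T' = T
    · exact Or.inr (by rw [← h, hcard']; exact even_two_mul _)
    · exact Or.inl h
  have key := sum_signChar_eq_re_one_add_I_pow hT hQ hT' hproper
    (by rw [Fintype.card_fun_zmod_two_prod, hcard'])
  rw [sum_signChar_hyperbolicForm, hcard', one_add_I_pow_two_mul_add_one, one_add_I_mul_I_pow,
    ((Nat.odd_choose_two_succ_iff _).2 hm).neg_one_pow, ← ofReal_ofNat, ← ofReal_pow,
    re_ofReal_mul] at key
  have : (0 : ℝ) < 2 ^ Fintype.card ι := by positivity
  push_cast at key
  linarith

theorem card_add_one_le_hurwitzRadonPow2 : #T + 1 ≤ hurwitzRadonPow2 (Fintype.card ι) := by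
  unfold hurwitzRadonPow2
  split_ifs
  · have := card_le_two_mul_of_even hT hQ (Nat.even_iff.2 (by omega))
    omega
  · have := card_le_two_mul_add_one hT
    omega
  · have := card_lt_two_mul hT hQ (by omega)
    omega

end HyperbolicBounds

section HyperbolicLift

variable {R ι : Type*} [CommRing R] [DecidableEq ι] (L : (ι → R) → Module.Dual R (ι → R))

def hyperbolicLift (x : ι → R) : ι → R × R := fun i => (x i, L x (Pi.single i 1))

theorem hyperbolicLift_injective : Function.Injective (hyperbolicLift L) :=
  fun _ _ h => funext fun i => congrArg Prod.fst (congrFun h i)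

variable [Fintype ι]

theorem Module.Dual.apply_eq_sum_mul (f : Module.Dual R (ι → R)) (y : ι → R) :
    f y = ∑ i, y i * f (Pi.single i 1) := by
  rw [f.pi_apply_eq_sum_univ y]
  refine sum_congr rfl fun i _ => ?_
  rw [smul_eq_mul]
  congr
  ext j
  simp [Pi.single_apply, eq_comm]

theorem hyperbolicForm_hyperbolicLift (x : ι → R) :
    hyperbolicForm R ι (hyperbolicLift L x) = L x x := by
  rw [hyperbolicForm_apply, (L x).apply_eq_sum_mul]
  rfl

theorem polar_hyperbolicLift (x y : ι → R) :
    polar (hyperbolicForm R ι) (hyperbolicLift L x) (hyperbolicLift L y) = L y x + L x y := by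
  rw [polar_hyperbolicForm, sum_add_distrib, (L x).apply_eq_sum_mul, (L y).apply_eq_sum_mul]
  rfl

end HyperbolicLift

theorem card_add_one_le_hurwitzRadonPow2_of_polar_eq {ι : Type*} [Fintype ι] [DecidableEq ι]
    {α : (ι → ZMod 2) → ZMod 2} (L : (ι → ZMod 2) → Module.Dual (ZMod 2) (ι → ZMod 2))
    (hself : ∀ x, L x x = α x) (hpolar : ∀ x y, polar α x y = L y x + L x y)
    {S : Finset (ι → ZMod 2)} (hS : ∀ x ∈ S, α x = 1)
    (hSS : (S : Set (ι → ZMod 2)).Pairwise fun x y => polar α x y = 1) :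
    #S + 1 ≤ hurwitzRadonPow2 (Fintype.card ι) := by
  rw [← card_image_of_injective S (hyperbolicLift_injective L)]
  refine card_add_one_le_hurwitzRadonPow2 ?_ ?_
  · rintro _ hv _ hw hvw
    obtain ⟨x, hx, rfl⟩ := mem_image.1 hv
    obtain ⟨y, hy, rfl⟩ := mem_image.1 hw
    rw [polar_hyperbolicLift, ← hpolar]
    exact hSS hx hy (ne_of_apply_ne _ hvw)
  · intro _ hv
    obtain ⟨x, hx, rfl⟩ := mem_image.1 hv
    rw [hyperbolicForm_hyperbolicLift, hself, hS x hx]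

section CubicForm

variable {n : ℕ}

def cubicPolar (c : Fin n → Fin n → Fin n → ZMod 2) (x : Fin n → ZMod 2) :
    Module.Dual (ZMod 2) (Fin n → ZMod 2) :=
  ∑ i, ∑ j, ∑ k, if i ≤ j ∧ j ≤ k then
    c i j k • ((x i * x j) • LinearMap.proj k + (x i * x k) • LinearMap.proj j +
      (x j * x k) • LinearMap.proj i) else 0

theorem cubicPolar_apply (c : Fin n → Fin n → Fin n → ZMod 2) (x y : Fin n → ZMod 2) :
    cubicPolar c x y = ∑ i, ∑ j, ∑ k, if i ≤ j ∧ j ≤ k then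
      c i j k * (x i * x j * y k + x i * y j * x k + y i * x j * x k) else 0 := by
  simp only [cubicPolar, LinearMap.coe_sum, Finset.sum_apply]
  refine sum_congr rfl fun i _ => sum_congr rfl fun j _ => sum_congr rfl fun k _ => ?_
  split_ifs
  · simp only [LinearMap.smul_apply, LinearMap.add_apply, LinearMap.proj_apply, smul_eq_mul]
    ring
  · rfl

variable {c : Fin n → Fin n → Fin n → ZMod 2} {α : (Fin n → ZMod 2) → ZMod 2}
  (hc : ∀ x, α x = ∑ i, ∑ j, ∑ k, if i ≤ j ∧ j ≤ k then c i j k * x i * x j * x k else 0)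
include hc

theorem cubicPolar_self (x : Fin n → ZMod 2) : cubicPolar c x x = α x := by
  rw [cubicPolar_apply, hc]
  refine sum_congr rfl fun i _ => sum_congr rfl fun j _ => sum_congr rfl fun k _ => ?_
  have h3 : (3 : ZMod 2) = 1 := rfl
  split_ifs
  · linear_combination (c i j k * x i * x j * x k) * h3
  · rfl

theorem polar_eq_cubicPolar (x y : Fin n → ZMod 2) :
    polar α x y = cubicPolar c y x + cubicPolar c x y := by
  simp only [polar, hc, cubicPolar_apply, ← sum_add_distrib, ← sum_sub_distrib]
  refine sum_congr rfl fun i _ => sum_congr rfl fun j _ => sum_congr rfl fun k _ => ?_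
  split_ifs
  · simp only [Pi.add_apply]
    ring
  · simp

end CubicForm

/-- If `α` is a cubic form on `𝔽₂ⁿ` and `A ⊆ 𝔽₂ⁿ` satisfies `α(x + x') = 1`
for all distinct `x, x' ∈ A`, then `|A| ≤ ρ(2ⁿ)`. -/
theorem card_le_hurwitzRadon_of_cubicForm
    (n : ℕ) (α : (Fin n → ZMod 2) → ZMod 2) (hα : IsCubicForm α)
    (A : Finset (Fin n → ZMod 2))
    (h : ∀ x ∈ A, ∀ x' ∈ A, x ≠ x' → α (x + x') = 1) :
    A.card ≤ hurwitzRadonPow2 n := by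
  obtain ⟨c, hc⟩ := hα
  obtain rfl | ⟨x₀, hx₀⟩ := A.eq_empty_or_nonempty
  · simp
  have key := card_add_one_le_hurwitzRadonPow2_of_polar_eq (cubicPolar c) (cubicPolar_self hc)
    (polar_eq_cubicPolar hc) (S := (A.erase x₀).image (· + x₀)) ?_ ?_
  · rw [card_image_of_injective _ (add_left_injective x₀), card_erase_of_mem hx₀,
      Fintype.card_fin] at key
    omega
  · intro _ hx
    obtain ⟨a, ha, rfl⟩ := mem_image.1 hx
    exact h a (mem_of_mem_erase ha) x₀ hx₀ (ne_of_mem_erase ha)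
  · rintro _ hx _ hy hxy
    obtain ⟨a, ha, rfl⟩ := mem_image.1 hx
    obtain ⟨a', ha', rfl⟩ := mem_image.1 hy
    have hne : a ≠ a' := fun h' => hxy (h' ▸ rfl)
    rw [polar, add_add_add_comm, ZModModule.add_self, add_zero,
      h a (mem_of_mem_erase ha) a' (mem_of_mem_erase ha') hne,
      h a (mem_of_mem_erase ha) x₀ hx₀ (ne_of_mem_erase ha),
      h a' (mem_of_mem_erase ha') x₀ hx₀ (ne_of_mem_erase ha')]
    rfl
end

section
/- For every n with n ≡ 1, 2 or 3 (mod 4), there exist a cubic form α : 𝔽₂ⁿ → 𝔽₂ and a subset A ⊆ 𝔽₂ⁿ with |A| = ρ(2ⁿ) such that α(x + x') = 1 for every two distinct elements x, x' ∈ A, where ρ(2ⁿ) = 2n if n ≡ 1 or 2 (mod 4) and ρ(2ⁿ) = 2n+2 if n ≡ 3 (mod 4). (Sharpness of the bound |A| ≤ ρ(2ⁿ).) -/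
open Finset
open scoped symmDiff

namespace IsCubicForm

variable {n : ℕ}

lemma zero : IsCubicForm (fun _ : Fin n → ZMod 2 => 0) :=
  ⟨0, fun x => by simp⟩

lemma add {α β : (Fin n → ZMod 2) → ZMod 2} (hα : IsCubicForm α) (hβ : IsCubicForm β) :
    IsCubicForm (α + β) := by
  obtain ⟨c, hc⟩ := hα
  obtain ⟨d, hd⟩ := hβ
  refine ⟨c + d, fun x => ?_⟩
  simp only [Pi.add_apply, hc, hd, ← sum_add_distrib, add_mul, ite_add_ite, add_zero]

lemma sum {ι : Type*} (s : Finset ι) {α : ι → (Fin n → ZMod 2) → ZMod 2}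
    (h : ∀ i ∈ s, IsCubicForm (α i)) : IsCubicForm (fun x => ∑ i ∈ s, α i x) := by
  classical
  induction s using Finset.induction_on with
  | empty => simpa using zero
  | insert a s ha ih =>
    simp only [sum_insert ha]
    exact (h a (mem_insert_self a s)).add (ih fun i hi => h i (mem_insert_of_mem hi))

end IsCubicForm

lemma isCubicForm_mul_mul {n : ℕ} {a b c : Fin n} (hab : a ≤ b) (hbc : b ≤ c) :
    IsCubicForm fun x => x a * x b * x c := by
  refine ⟨fun i j k => if i = a ∧ j = b ∧ k = c then 1 else 0, fun x => ?_⟩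
  rw [Fintype.sum_eq_single a fun i hi => by simp [hi],
    Fintype.sum_eq_single b fun j hj => by simp [hj],
    Fintype.sum_eq_single c fun k hk => by simp [hk]]
  simp [hab, hbc]

lemma isCubicForm_prod {n : ℕ} {t : Finset (Fin n)} (h₁ : 1 ≤ #t) (h₃ : #t ≤ 3) :
    IsCubicForm fun x => ∏ i ∈ t, x i := by
  have idem : ∀ y : ZMod 2, y * y = y := by decide
  obtain ⟨k, hk⟩ : ∃ k, #t = k := ⟨_, rfl⟩
  rw [hk] at h₁ h₃
  set e := t.orderEmbOfFin hk
  have he : ∀ x : Fin n → ZMod 2, ∏ i ∈ t, x i = ∏ m, x (e m) := by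
    intro x; rw [← map_orderEmbOfFin_univ t hk, prod_map]; rfl
  simp only [he]
  interval_cases k
  · simpa [idem] using isCubicForm_mul_mul (le_refl (e 0)) (le_refl (e 0))
  · simpa [Fin.prod_univ_two, idem] using
      isCubicForm_mul_mul (le_refl (e 0)) (e.monotone (Fin.zero_le 1))
  · simpa [Fin.prod_univ_three, idem] using
      isCubicForm_mul_mul (e.monotone (Fin.zero_le 1)) (e.monotone (by decide : (1 : Fin 3) ≤ 2))

def indicatorVec {ι : Type*} [DecidableEq ι] (S : Finset ι) : ι → ZMod 2 :=
  fun i => if i ∈ S then 1 else 0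

noncomputable def esymmSum {ι : Type*} [Fintype ι] (x : ι → ZMod 2) : ZMod 2 :=
  ∑ k ∈ Icc 1 3, MvPolynomial.eval x (MvPolynomial.esymm ι (ZMod 2) k)

section Indicator

variable {ι : Type*} [DecidableEq ι]

lemma indicatorVec_add (S T : Finset ι) :
    indicatorVec S + indicatorVec T = indicatorVec (S ∆ T) := by
  funext i
  by_cases hS : i ∈ S <;> by_cases hT : i ∈ T <;>
    simp [indicatorVec, mem_symmDiff, hS, hT, show (1 : ZMod 2) + 1 = 0 from rfl]

lemma indicatorVec_injective : Function.Injective (indicatorVec (ι := ι)) := by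
  intro S T h
  ext i
  have := congrFun h i
  by_cases hS : i ∈ S <;> by_cases hT : i ∈ T <;> simp_all [indicatorVec]

lemma prod_indicatorVec (S t : Finset ι) :
    ∏ i ∈ t, indicatorVec S i = if t ⊆ S then 1 else 0 := by
  split_ifs with h
  · exact prod_eq_one fun i hi => if_pos (h hi)
  · obtain ⟨i, hi, hiS⟩ := not_subset.1 h
    exact prod_eq_zero hi (if_neg hiS)

variable [Fintype ι]

lemma eval_esymm_indicatorVec (S : Finset ι) (k : ℕ) :
    MvPolynomial.eval (indicatorVec S) (MvPolynomial.esymm ι (ZMod 2) k) = ((#S).choose k : ℕ) := by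
  simp only [MvPolynomial.esymm, map_sum, map_prod, MvPolynomial.eval_X, prod_indicatorVec,
    sum_boole, ← card_powersetCard]
  congr 2
  ext t
  simp [mem_powersetCard, and_comm]

lemma esymmSum_indicatorVec (S : Finset ι) :
    esymmSum (indicatorVec S) = ((∑ k ∈ Icc 1 3, (#S).choose k : ℕ) : ZMod 2) := by
  simp [esymmSum, eval_esymm_indicatorVec]

end Indicator

lemma odd_sum_choose_of_mod_four_ne_zero {w : ℕ} (hw : w % 4 ≠ 0) :
    Odd (∑ k ∈ Icc 1 3, w.choose k) := by
  have h₂ : w.choose 2 ≡ (w % 2).choose 0 * (w / 2).choose 1 [MOD 2] :=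
    Choose.choose_modEq_choose_mod_mul_choose_div_nat
  have h₃ : w.choose 3 ≡ (w % 2).choose 1 * (w / 2).choose 1 [MOD 2] :=
    Choose.choose_modEq_choose_mod_mul_choose_div_nat
  simp only [Nat.ModEq, Nat.choose_zero_right, Nat.choose_one_right, one_mul] at h₂ h₃
  rw [Nat.odd_iff, show Icc 1 3 = {1, 2, 3} by decide, sum_insert (by decide), sum_pair (by decide),
    Nat.choose_one_right]
  rcases Nat.mod_two_eq_zero_or_one w with h | h <;> rw [h] at h₃ <;> omega

lemma isCubicForm_esymmSum {n : ℕ} : IsCubicForm (esymmSum (ι := Fin n)) := by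
  have h : esymmSum (ι := Fin n) =
      fun x => ∑ k ∈ Icc 1 3, ∑ t ∈ powersetCard k univ, ∏ i ∈ t, x i := by
    funext x
    simp [esymmSum, MvPolynomial.esymm, map_sum, map_prod]
  rw [h]
  refine IsCubicForm.sum _ fun k hk => IsCubicForm.sum _ fun t ht => ?_
  rw [mem_powersetCard] at ht
  rw [mem_Icc, ← ht.2] at hk
  exact isCubicForm_prod hk.1 hk.2

section SymmDiff

variable {α : Type*} [DecidableEq α]

lemma card_symmDiff_add_two_mul_card_inter (S T : Finset α) :
    #(S ∆ T) + 2 * #(S ∩ T) = #S + #T := by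
  have hsub : #(S ∩ T) ≤ #(S ∪ T) := card_le_card inter_subset_union
  rw [symmDiff_eq_sup_sdiff_inf, sup_eq_union, inf_eq_inter,
    card_sdiff_of_subset inter_subset_union, ← card_union_add_card_inter S T]
  omega

lemma card_symmDiff_mod_four_ne_zero_of_near_point {a : α} {S T : Finset α}
    (hS : #S ≤ 1 ∨ (#S = 2 ∧ a ∈ S)) (hT : #T ≤ 1 ∨ (#T = 2 ∧ a ∈ T)) (hST : S ≠ T) :
    #(S ∆ T) % 4 ≠ 0 := by
  have key := card_symmDiff_add_two_mul_card_inter S T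
  have hne : #(S ∆ T) ≠ 0 := by simpa [card_eq_zero] using hST
  rcases hS with hS | ⟨hS, haS⟩
  · omega
  rcases hT with hT | ⟨hT, haT⟩
  · omega
  have : 0 < #(S ∩ T) := card_pos.2 ⟨a, mem_inter.2 ⟨haS, haT⟩⟩
  omega

lemma card_symmDiff_mod_four_ne_zero_of_near_extreme [Fintype α] (hα : Fintype.card α % 4 = 3)
    {S T : Finset α} (hS : #S ≤ 1 ∨ Fintype.card α ≤ #S + 1)
    (hT : #T ≤ 1 ∨ Fintype.card α ≤ #T + 1) (hST : S ≠ T) : #(S ∆ T) % 4 ≠ 0 := by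
  have key := card_symmDiff_add_two_mul_card_inter S T
  have hne : #(S ∆ T) ≠ 0 := by simpa [card_eq_zero] using hST
  have hunion := card_union_add_card_inter S T
  have : #(S ∪ T) ≤ Fintype.card α := card_le_univ _
  have : #(S ∩ T) ≤ #S := card_le_card inter_subset_left
  have : #(S ∩ T) ≤ #T := card_le_card inter_subset_right
  omega

end SymmDiff

lemma card_filter_card_mem {α : Type*} [Fintype α] (K : Finset ℕ) :
    #{S : Finset α | #S ∈ K} = ∑ k ∈ K, (Fintype.card α).choose k := by
  have hmaps : Set.MapsTo card (({S : Finset α | #S ∈ K} : Finset (Finset α)) : Set (Finset α))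
      (K : Set ℕ) := fun S hS => by simpa using hS
  rw [card_eq_sum_card_fiberwise hmaps]
  refine sum_congr rfl fun k hk => ?_
  rw [← card_univ, ← card_powersetCard]
  congr 1
  ext S
  simp only [mem_filter, mem_univ, true_and, mem_powersetCard, subset_univ]
  exact ⟨And.right, fun hS => ⟨hS ▸ hk, hS⟩⟩

lemma exists_pairwise_esymmSum_add_eq_one {ι : Type*} [Fintype ι] [DecidableEq ι]
    (F : Finset (Finset ι)) (hF : ∀ S ∈ F, ∀ T ∈ F, S ≠ T → #(S ∆ T) % 4 ≠ 0) :
    ∃ A : Finset (ι → ZMod 2), #A = #F ∧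
      (A : Set (ι → ZMod 2)).Pairwise fun x y => esymmSum (x + y) = 1 := by
  refine ⟨F.image indicatorVec, card_image_of_injective _ indicatorVec_injective, ?_⟩
  rw [coe_image, indicatorVec_injective.injOn.pairwise_image]
  intro S hS T hT hST
  rw [Function.onFun, indicatorVec_add, esymmSum_indicatorVec, ZMod.natCast_eq_one_iff_odd]
  exact odd_sum_choose_of_mod_four_ne_zero (hF S hS T hT hST)

lemma exists_pairwise_esymmSum_add_eq_one_card_two_mul {n : ℕ} (hn : 0 < n) :
    ∃ A : Finset (Fin n → ZMod 2), #A = 2 * n ∧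
      (A : Set (Fin n → ZMod 2)).Pairwise fun x y => esymmSum (x + y) = 1 := by
  let a : Fin n := ⟨0, hn⟩
  obtain ⟨A, hA, hpair⟩ := exists_pairwise_esymmSum_add_eq_one
    {S : Finset (Fin n) | #S ≤ 1 ∨ (#S = 2 ∧ a ∈ S)} fun S hS T hT hST =>
      card_symmDiff_mod_four_ne_zero_of_near_point (mem_filter.1 hS).2 (mem_filter.1 hT).2 hST
  refine ⟨A, ?_, hpair⟩
  have hsmall : #{S : Finset (Fin n) | #S ≤ 1} = n + 1 := by
    have : #{S : Finset (Fin n) | #S ≤ 1} = #{S : Finset (Fin n) | #S ∈ range 2} := by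
      simp
    rw [this, card_filter_card_mem]
    simp [sum_range_succ, add_comm]
  have hpairs : #{S : Finset (Fin n) | #S = 2 ∧ a ∈ S} = n - 1 := by
    have : ({S | #S = 2 ∧ a ∈ S} : Finset (Finset (Fin n))) =
        (powersetCard 2 univ).filter ({a} ⊆ ·) := by
      ext S
      simp [mem_powersetCard]
    rw [this, card_filter_powersetCard_subset {a} univ 2 (subset_univ _) (by simp)]
    simp
  rw [hA, filter_or, card_union_of_disjoint (disjoint_filter.2 fun S _ h1 h2 => by omega), hsmall,
    hpairs]
  omega

lemma exists_pairwise_esymmSum_add_eq_one_card_two_mul_add_two {n : ℕ} (hn : n % 4 = 3) :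
    ∃ A : Finset (Fin n → ZMod 2), #A = 2 * n + 2 ∧
      (A : Set (Fin n → ZMod 2)).Pairwise fun x y => esymmSum (x + y) = 1 := by
  have hcard : Fintype.card (Fin n) % 4 = 3 := by rwa [Fintype.card_fin]
  have hF : ∀ S ∈ ({S : Finset (Fin n) | #S ∈ ({0, 1, n - 1, n} : Finset ℕ)} : Finset _),
      #S ≤ 1 ∨ Fintype.card (Fin n) ≤ #S + 1 := by
    intro S hS
    simp only [mem_filter, mem_univ, true_and, mem_insert, mem_singleton] at hS
    rw [Fintype.card_fin]
    omega
  obtain ⟨A, hA, hpair⟩ := exists_pairwise_esymmSum_add_eq_one _ fun S hS T hT hST =>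
    card_symmDiff_mod_four_ne_zero_of_near_extreme hcard (hF S hS) (hF T hT) hST
  refine ⟨A, ?_, hpair⟩
  rw [hA, card_filter_card_mem, Fintype.card_fin,
    sum_insert (by simp only [mem_insert, mem_singleton]; omega),
    sum_insert (by simp only [mem_insert, mem_singleton]; omega), sum_pair (by omega),
    Nat.choose_zero_right, Nat.choose_one_right, Nat.choose_symm (by omega), Nat.choose_one_right,
    Nat.choose_self]
  omega

/-- For `n ≡ 1, 2` or `3 (mod 4)` the bound `|A| ≤ ρ(2ⁿ)` is sharp: there exist
a cubic form `α` on `𝔽₂ⁿ` and a subset `A ⊆ 𝔽₂ⁿ` with `|A| = ρ(2ⁿ)` such that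
`α(x + x') = 1` for all distinct `x, x' ∈ A`. -/
theorem card_le_hurwitzRadon_of_cubicForm_sharp
    (n : ℕ) (h : n % 4 = 1 ∨ n % 4 = 2 ∨ n % 4 = 3) :
    ∃ α : (Fin n → ZMod 2) → ZMod 2, IsCubicForm α ∧
      ∃ A : Finset (Fin n → ZMod 2), A.card = hurwitzRadonPow2 n ∧
        ∀ x ∈ A, ∀ x' ∈ A, x ≠ x' → α (x + x') = 1 := by
  refine ⟨esymmSum, isCubicForm_esymmSum, ?_⟩
  rw [hurwitzRadonPow2, if_neg (by omega)]
  split_ifs with h3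
  · exact exists_pairwise_esymmSum_add_eq_one_card_two_mul_add_two h3
  · exact exists_pairwise_esymmSum_add_eq_one_card_two_mul (by omega)
end

section
/- For every x ∈ 𝔽₂ⁿ, the cubic form α_𝕆 satisfies: α_𝕆(x) = 0 if the Hamming weight wt(x) is congruent to 0 modulo 4, and α_𝕆(x) = 1 otherwise. -/
/-!
On a 0/1 vector of Hamming weight `w` the sums `Σ_{i<j} x_i x_j` and `Σ_{i<j<k} x_i x_j x_k`
count the pairs and triples of nonzero coordinates, so `α_𝕆(x) = C(w,3) + C(w,2) + C(w,1)`
in `𝔽₂`. Since `(1 + X)^4 = 1 + X^4` over `𝔽₂`, the parities of `C(w,k)` for `k < 4` depend only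
on `w mod 4`, and the four cases `w = 0, 1, 2, 3` give `0, 1, 1, 1`.
-/

/-- The cubic form `α_𝕆` on `𝔽₂ⁿ`:
`α_𝕆(x) = Σ_{i<j<k} x_i x_j x_k + Σ_{i<j} x_i x_j + Σ_i x_i`. -/
def alphaO {n : ℕ} (x : Fin n → ZMod 2) : ZMod 2 :=
  (∑ i, ∑ j, ∑ k, if i < j ∧ j < k then x i * x j * x k else 0)
    + (∑ i, ∑ j, if i < j then x i * x j else 0)
    + ∑ i, x i

open Finset

section ProductSums

variable {R : Type*} [CommSemiring R]

def pairProductSum {n : ℕ} (x : Fin n → R) : R :=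
  ∑ i, ∑ j, if i < j then x i * x j else 0

def tripleProductSum {n : ℕ} (x : Fin n → R) : R :=
  ∑ i, ∑ j, ∑ k, if i < j ∧ j < k then x i * x j * x k else 0

theorem pairProductSum_cons {n : ℕ} (a : R) (y : Fin n → R) :
    pairProductSum (Fin.cons a y : Fin (n + 1) → R) = a * ∑ i, y i + pairProductSum y := by
  simp [pairProductSum, Fin.sum_univ_succ, Fin.succ_pos, mul_sum]

theorem tripleProductSum_cons {n : ℕ} (a : R) (y : Fin n → R) :
    tripleProductSum (Fin.cons a y : Fin (n + 1) → R) =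
      a * pairProductSum y + tripleProductSum y := by
  simp [tripleProductSum, pairProductSum, Fin.sum_univ_succ, Fin.succ_pos, mul_sum, mul_assoc]

end ProductSums

theorem hammingNorm_cons {β : Type*} [Zero β] [DecidableEq β] {n : ℕ} (a : β) (y : Fin n → β) :
    hammingNorm (Fin.cons a y : Fin (n + 1) → β) = hammingNorm y + if a = 0 then 0 else 1 := by
  simp only [hammingNorm, card_filter, Fin.sum_univ_succ, Fin.cons_zero, Fin.cons_succ]
  split_ifs <;> simp_all [add_comm]

section BooleanVectors

variable {R : Type*} [CommSemiring R] [DecidableEq R]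

theorem sum_eq_hammingNorm {n : ℕ} {x : Fin n → R} (hx : ∀ i, x i = 0 ∨ x i = 1) :
    ∑ i, x i = hammingNorm x := by
  nontriviality R
  induction x using Fin.consInduction with
  | elim0 => simp [hammingNorm]
  | cons a y ih =>
    have hy : ∀ i, y i = 0 ∨ y i = 1 := fun i => by simpa using hx i.succ
    obtain rfl | rfl : a = 0 ∨ a = 1 := by simpa using hx 0
    all_goals simp [Fin.sum_cons, hammingNorm_cons, ih hy, add_comm]

theorem pairProductSum_eq_choose {n : ℕ} {x : Fin n → R} (hx : ∀ i, x i = 0 ∨ x i = 1) :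
    pairProductSum x = (hammingNorm x).choose 2 := by
  nontriviality R
  induction x using Fin.consInduction with
  | elim0 => simp [pairProductSum, hammingNorm]
  | cons a y ih =>
    have hy : ∀ i, y i = 0 ∨ y i = 1 := fun i => by simpa using hx i.succ
    obtain rfl | rfl : a = 0 ∨ a = 1 := by simpa using hx 0
    all_goals simp [pairProductSum_cons, hammingNorm_cons, ih hy, sum_eq_hammingNorm hy,
      Nat.choose_succ_succ']

theorem tripleProductSum_eq_choose {n : ℕ} {x : Fin n → R} (hx : ∀ i, x i = 0 ∨ x i = 1) :
    tripleProductSum x = (hammingNorm x).choose 3 := by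
  nontriviality R
  induction x using Fin.consInduction with
  | elim0 => simp [tripleProductSum, hammingNorm]
  | cons a y ih =>
    have hy : ∀ i, y i = 0 ∨ y i = 1 := fun i => by simpa using hx i.succ
    obtain rfl | rfl : a = 0 ∨ a = 1 := by simpa using hx 0
    all_goals simp [tripleProductSum_cons, hammingNorm_cons, ih hy, pairProductSum_eq_choose hy,
      Nat.choose_succ_succ']

end BooleanVectors

/-- Vandermonde with `C(4, j)` even for `0 < j < 4`. -/
theorem natCast_choose_add_four_zmod_two (w : ℕ) {k : ℕ} (hk : k < 4) :
    ((w + 4).choose k : ZMod 2) = w.choose k := by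
  rw [Nat.add_choose_eq]
  interval_cases k <;> simp [Nat.antidiagonal_succ, Nat.choose] <;> reduce_mod_char

theorem natCast_choose_three_add_choose_two_add_choose_one_zmod_two (w : ℕ) :
    ((w.choose 3 + w.choose 2 + w.choose 1 : ℕ) : ZMod 2) = if w % 4 = 0 then 0 else 1 := by
  induction w using Nat.strong_induction_on with
  | _ w ih =>
    by_cases hw : w < 4
    · interval_cases w <;> decide
    · obtain ⟨v, rfl⟩ := Nat.exists_eq_add_of_le' (not_lt.mp hw)
      push_cast [natCast_choose_add_four_zmod_two, Nat.add_mod_right]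
      exact_mod_cast ih v (by omega)

/-- `α_𝕆` is the counting function: `α_𝕆(x) = 0` if the Hamming weight of `x`
is divisible by `4`, and `α_𝕆(x) = 1` otherwise. -/
theorem alphaO_eq_counting {n : ℕ} (x : Fin n → ZMod 2) :
    alphaO x = if hammingNorm x % 4 = 0 then 0 else 1 := by
  have hx : ∀ i, x i = 0 ∨ x i = 1 := fun i => (by decide : ∀ a : ZMod 2, a = 0 ∨ a = 1) (x i)
  calc alphaO x = tripleProductSum x + pairProductSum x + ∑ i, x i := rfl
    _ = (((hammingNorm x).choose 3 + (hammingNorm x).choose 2 + (hammingNorm x).choose 1 : ℕ) :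
          ZMod 2) := by
      rw [tripleProductSum_eq_choose hx, pairProductSum_eq_choose hx, sum_eq_hammingNorm hx]
      push_cast [Nat.choose_one_right]
      rfl
    _ = _ := natCast_choose_three_add_choose_two_add_choose_one_zmod_two _
end

section
/- For every cubic form α : 𝔽₂ⁿ → 𝔽₂ there exists a function f : 𝔽₂ⁿ × 𝔽₂ⁿ → 𝔽₂ satisfying all of the following, for all x, y, z, y' ∈ 𝔽₂ⁿ: (a) f(x,y) + f(y,x) = α(x+y) + α(x) + α(y); (b) f(y,z) + f(x+y,z) + f(x,y+z) + f(x,y) = α(x+y+z) + α(x+y) + α(x+z) + α(y+z) + α(x) + α(y) + α(z); (c) f(x, y+y') = f(x,y) + f(x,y'); (d) f(x,x) = α(x). -/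
/-- For every cubic form `α` on `𝔽₂ⁿ` there exists a twisting function
`f : 𝔽₂ⁿ × 𝔽₂ⁿ → 𝔽₂` satisfying:
(a) the first polarization formula `f(x,y) + f(y,x) = α(x+y) + α(x) + α(y)`;
(b) the second polarization formula
`δf(x,y,z) = α(x+y+z) + α(x+y) + α(x+z) + α(y+z) + α(x) + α(y) + α(z)`;
(c) linearity in the second variable `f(x, y+y') = f(x,y) + f(x,y')`;
(d) `f(x,x) = α(x)`. -/
theorem exists_twisting_function_of_cubicForm
    (n : ℕ) (α : (Fin n → ZMod 2) → ZMod 2) (hα : IsCubicForm α) :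
    ∃ f : (Fin n → ZMod 2) → (Fin n → ZMod 2) → ZMod 2,
      (∀ x y, f x y + f y x = α (x + y) + α x + α y) ∧
      (∀ x y z, f y z + f (x + y) z + f x (y + z) + f x y =
        α (x + y + z) + α (x + y) + α (x + z) + α (y + z) + α x + α y + α z) ∧
      (∀ x y y', f x (y + y') = f x y + f x y') ∧
      (∀ x, f x x = α x) := by
  obtain ⟨c, hc⟩ := hα
  refine ⟨fun x y => ∑ i, ∑ j, ∑ k, if i ≤ j ∧ j ≤ k then
      c i j k * (if i < j ∧ j < k then
        x i * x j * y k + x i * y j * x k + y i * x j * x k else x i * y k) else 0,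
    ?_, ?_, ?_, ?_⟩
  · intro x y
    simp only [hc, ← Finset.sum_add_distrib]
    refine Finset.sum_congr rfl fun i _ => Finset.sum_congr rfl fun j _ =>
      Finset.sum_congr rfl fun k _ => ?_
    simp only [Pi.add_apply]
    split_ifs with hP hQ
    · obtain ⟨h1, h2⟩ := hQ
      generalize c i j k = C; generalize x i = a; generalize x j = b; generalize x k = d
      generalize y i = e; generalize y j = g; generalize y k = h
      revert C a b d e g h; decide
    · obtain ⟨hij, hjk⟩ := hP
      rcases eq_or_lt_of_le hij with h1 | h1
      · subst h1
        generalize c i i k = C; generalize x i = a; generalize x k = d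
        generalize y i = e; generalize y k = h
        revert C a d e h; decide
      · rcases eq_or_lt_of_le hjk with h2 | h2
        · subst h2
          generalize c i j j = C; generalize x i = a; generalize x j = b
          generalize y i = e; generalize y j = g
          revert C a b e g; decide
        · exact absurd ⟨h1, h2⟩ hQ
    · simp
  · intro x y z
    simp only [hc, ← Finset.sum_add_distrib]
    refine Finset.sum_congr rfl fun i _ => Finset.sum_congr rfl fun j _ =>
      Finset.sum_congr rfl fun k _ => ?_
    simp only [Pi.add_apply]
    split_ifs with hP hQ
    · generalize c i j k = C; generalize x i = a; generalize x j = b; generalize x k = d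
      generalize y i = e; generalize y j = g; generalize y k = h
      generalize z i = a'; generalize z j = b'; generalize z k = d'
      revert C a b d e g h a' b' d'; decide
    · obtain ⟨hij, hjk⟩ := hP
      rcases eq_or_lt_of_le hij with h1 | h1
      · subst h1
        generalize c i i k = C; generalize x i = a; generalize x k = d
        generalize y i = e; generalize y k = h
        generalize z i = a'; generalize z k = d'
        revert C a d e h a' d'; decide
      · rcases eq_or_lt_of_le hjk with h2 | h2
        · subst h2
          generalize c i j j = C; generalize x i = a; generalize x j = b
          generalize y i = e; generalize y j = g
          generalize z i = a'; generalize z j = b'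
          revert C a b e g a' b'; decide
        · exact absurd ⟨h1, h2⟩ hQ
    · simp
  · intro x y y'
    simp only [← Finset.sum_add_distrib]
    refine Finset.sum_congr rfl fun i _ => Finset.sum_congr rfl fun j _ =>
      Finset.sum_congr rfl fun k _ => ?_
    simp only [Pi.add_apply]
    split_ifs with hP hQ
    · ring
    · ring
    · simp
  · intro x
    simp only [hc]
    refine Finset.sum_congr rfl fun i _ => Finset.sum_congr rfl fun j _ =>
      Finset.sum_congr rfl fun k _ => ?_
    split_ifs with hP hQ
    · generalize c i j k = C; generalize x i = a; generalize x j = b; generalize x k = d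
      revert C a b d; decide
    · obtain ⟨hij, hjk⟩ := hP
      rcases eq_or_lt_of_le hij with h1 | h1
      · subst h1
        generalize c i i k = C; generalize x i = a; generalize x k = d
        revert C a d; decide
      · rcases eq_or_lt_of_le hjk with h2 | h2
        · subst h2
          generalize c i j j = C; generalize x i = a; generalize x j = b
          revert C a b; decide
        · exact absurd ⟨h1, h2⟩ hQ
    · rfl
end

section
/- For every n ≥ 2, the set A = {0, e₁, e₂, …, e_n, e₁+e₂, e₁+e₃, …, e₁+e_n} ⊆ 𝔽₂ⁿ has cardinality 2n, and for all distinct x, x' ∈ A the Hamming weight of x + x' satisfies 1 ≤ wt(x+x') ≤ 3; in particular wt(x+x') is not a multiple of 4, so A is a Hurwitzian set. -/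
open Finset

private def ind {n : ℕ} (s : Finset (Fin n)) : Fin n → ZMod 2 := fun k => if k ∈ s then 1 else 0

private lemma wt_ind {n : ℕ} (s : Finset (Fin n)) : hammingNorm (ind s) = s.card := by
  unfold ind hammingNorm
  congr 1
  ext k
  by_cases h : k ∈ s <;> simp [h]

private lemma ind_add {n : ℕ} (s t : Finset (Fin n)) : ind s + ind t = ind (symmDiff s t) := by
  funext k
  simp only [ind, Pi.add_apply, Finset.mem_symmDiff]
  by_cases hs : k ∈ s <;> by_cases ht : k ∈ t <;> simp [hs, ht] <;> decide

private lemma ind_inj {n : ℕ} {s t : Finset (Fin n)} (h : ind s = ind t) : s = t := by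
  ext k
  have := congrFun h k
  simp only [ind] at this
  by_cases hs : k ∈ s <;> by_cases ht : k ∈ t <;> simp_all

private lemma single_eq_ind {n : ℕ} (i : Fin n) :
    Pi.single i (1 : ZMod 2) = ind {i} := by
  funext k
  by_cases h : k = i <;> simp [ind, Pi.single_apply, h]

private lemma pair_eq_ind {n : ℕ} (i j : Fin n) (h : i ≠ j) :
    Pi.single i (1 : ZMod 2) + Pi.single j 1 = ind {i, j} := by
  rw [single_eq_ind, single_eq_ind, ind_add]
  have hst : symmDiff ({i} : Finset (Fin n)) {j} = {i, j} := by
    ext k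
    simp only [Finset.mem_symmDiff, Finset.mem_singleton, Finset.mem_insert]
    constructor
    · rintro (⟨rfl, -⟩ | ⟨rfl, -⟩) <;> tauto
    · rintro (rfl | rfl)
      · exact Or.inl ⟨rfl, h⟩
      · exact Or.inr ⟨rfl, fun hk => h hk.symm⟩
  rw [hst]

private lemma ind_empty {n : ℕ} : ind (∅ : Finset (Fin n)) = 0 := by
  funext k; simp [ind]

/-- For `n ≥ 2`, the set
`A = {0, e₁, …, e_n, e₁+e₂, …, e₁+e_n} ⊆ 𝔽₂ⁿ` has cardinality `2n`, and for all distinct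
`x, x' ∈ A` the Hamming weight of `x + x'` satisfies `1 ≤ wt(x+x') ≤ 3`; in particular it is
not a multiple of `4`, so `A` is a Hurwitzian set. -/
theorem hurwitzian_set_construction (n : ℕ) (hn : 2 ≤ n) :
    let e : Fin n → (Fin n → ZMod 2) := fun i => Pi.single i 1
    let A : Finset (Fin n → ZMod 2) :=
      insert 0 ((Finset.univ.image e) ∪
        ((Finset.univ.filter (fun i => i ≠ (⟨0, by omega⟩ : Fin n))).image
          (fun i => e ⟨0, by omega⟩ + e i)))
    A.card = 2 * n ∧
      (∀ x ∈ A, ∀ x' ∈ A, x ≠ x' →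
        1 ≤ hammingNorm (x + x') ∧ hammingNorm (x + x') ≤ 3) ∧
      (∀ x ∈ A, ∀ x' ∈ A, x ≠ x' → ¬ (4 ∣ hammingNorm (x + x'))) := by
  intro e A
  set z : Fin n := ⟨0, by omega⟩ with hz
  -- membership characterization
  have hmem : ∀ x ∈ A, ∃ s : Finset (Fin n),
      x = ind s ∧ s.card ≤ 2 ∧ (2 ≤ s.card → z ∈ s) := by
    intro x hx
    simp only [A, Finset.mem_insert, Finset.mem_union, Finset.mem_image,
      Finset.mem_filter, Finset.mem_univ, true_and] at hx
    rcases hx with rfl | ⟨i, rfl⟩ | ⟨i, hi, rfl⟩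
    · exact ⟨∅, ind_empty.symm, by simp⟩
    · exact ⟨{i}, single_eq_ind i, by simp⟩
    · refine ⟨{z, i}, pair_eq_ind z i (fun h => hi h.symm), ?_, fun _ => by simp⟩
      have : ({z, i} : Finset (Fin n)).card ≤ ({z} : Finset (Fin n)).card + 1 :=
        Finset.card_insert_le _ _
      simpa using this
  -- the weight bounds
  have key : ∀ x ∈ A, ∀ x' ∈ A, x ≠ x' →
      1 ≤ hammingNorm (x + x') ∧ hammingNorm (x + x') ≤ 3 := by
    intro x hx x' hx' hne
    obtain ⟨s, rfl, hs2, hsz⟩ := hmem x hx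
    obtain ⟨t, rfl, ht2, htz⟩ := hmem x' hx'
    have hst : s ≠ t := fun h => hne (by rw [h])
    rw [ind_add, wt_ind]
    constructor
    · rcases Finset.eq_empty_or_nonempty (symmDiff s t) with h | h
      · exact absurd (symmDiff_eq_bot.mp (by simpa using h)) hst
      · exact Finset.card_pos.mpr h
    · have hsub : symmDiff s t ⊆ s ∪ t := by
        intro k hk
        rw [Finset.mem_symmDiff] at hk
        rcases hk with ⟨h1, _⟩ | ⟨h1, _⟩ <;> simp [h1]
      have hcu : (s ∪ t).card ≤ s.card + t.card := Finset.card_union_le s t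
      by_cases hboth : s.card = 2 ∧ t.card = 2
      · have hzs : z ∈ s := hsz (by omega)
        have hzt : z ∈ t := htz (by omega)
        have hz' : z ∉ symmDiff s t := by
          rw [Finset.mem_symmDiff]; tauto
        have hsub' : symmDiff s t ⊆ (s ∪ t).erase z := by
          intro k hk
          exact Finset.mem_erase.mpr ⟨fun h => hz' (h ▸ hk), hsub hk⟩
        have h1 := Finset.card_le_card hsub'
        have h2 : ((s ∪ t).erase z).card = (s ∪ t).card - 1 :=
          Finset.card_erase_of_mem (by simp [hzs])
        omega
      · have := Finset.card_le_card hsub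
        omega
  have he : ∀ i : Fin n, e i = ind {i} := fun i => single_eq_ind i
  have hef : ∀ i : Fin n, i ≠ z → e z + e i = ind {z, i} :=
    fun i hi => pair_eq_ind z i (fun h => hi h.symm)
  refine ⟨?_, key, fun x hx x' hx' hne hdvd => ?_⟩
  · -- cardinality
    have h0 : (0 : Fin n → ZMod 2) ∉
        (Finset.univ.image e) ∪
        ((Finset.univ.filter (fun i => i ≠ z)).image (fun i => e z + e i)) := by
      simp only [Finset.mem_union, Finset.mem_image, Finset.mem_filter, Finset.mem_univ,
        true_and, not_or, not_exists]
      constructor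
      · intro i h
        have := ind_inj (n := n) (s := {i}) (t := ∅)
          (by rw [← he, h, ind_empty])
        simp at this
      · rintro i ⟨hi, h⟩
        have := ind_inj (n := n) (s := {z, i}) (t := ∅)
          (by rw [← hef i hi, h, ind_empty])
        simp at this
    have hdisj : Disjoint (Finset.univ.image e)
        ((Finset.univ.filter (fun i => i ≠ z)).image (fun i => e z + e i)) := by
      rw [Finset.disjoint_left]
      rintro a ha hb
      simp only [Finset.mem_image, Finset.mem_filter, Finset.mem_univ, true_and] at ha hb
      obtain ⟨i, rfl⟩ := ha
      obtain ⟨j, hj, hij⟩ := hb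
      have heq : ({z, j} : Finset (Fin n)) = {i} :=
        ind_inj (by rw [← hef j hj, hij, he])
      have h1 : z ∈ ({i} : Finset (Fin n)) := heq ▸ (by simp)
      have h2 : j ∈ ({i} : Finset (Fin n)) := heq ▸ (by simp)
      simp only [Finset.mem_singleton] at h1 h2
      exact hj (h2.trans h1.symm)
    have hinj : Function.Injective e := by
      intro i j h
      have := ind_inj (n := n) (s := {i}) (t := {j})
        (by rw [← he, ← he, h])
      simpa using this
    have hcard1 : (Finset.univ.image e).card = n := by
      rw [Finset.card_image_of_injective _ hinj, Finset.card_univ, Fintype.card_fin]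
    have hcard2 : ((Finset.univ.filter (fun i => i ≠ z)).image (fun i => e z + e i)).card
        = n - 1 := by
      rw [Finset.card_image_of_injOn, Finset.filter_ne', Finset.card_erase_of_mem (Finset.mem_univ z),
        Finset.card_univ, Fintype.card_fin]
      intro i hi j hj h
      simp only [Finset.mem_coe, Finset.mem_filter, Finset.mem_univ, true_and] at hi hj
      have heq : ({z, i} : Finset (Fin n)) = {z, j} :=
        ind_inj (by rw [← hef i hi, ← hef j hj]; exact h)
      have : i ∈ ({z, j} : Finset (Fin n)) := heq ▸ (by simp)
      simp only [Finset.mem_insert, Finset.mem_singleton] at this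
      tauto
    show A.card = 2 * n
    simp only [A]
    rw [Finset.card_insert_of_notMem h0, Finset.card_union_of_disjoint hdisj,
      hcard1, hcard2]
    omega
  · have := key x hx x' hx' hne
    have := Nat.le_of_dvd (by omega) hdvd
    omega
end

section
/- Let n ≡ 3 (mod 4). The set A = {0, ω} ∪ {e₁,…,e_n} ∪ {e₁+ω,…,e_n+ω} is the unique subset of 𝔽₂ⁿ of cardinality 2n+2 that is invariant under the action of the symmetric group 𝔖_n permuting the coordinates and satisfies that wt(x+x') is not a multiple of 4 for all distinct x, x' in the set. -/
open Finset

section Aux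
variable {n : ℕ}

lemma hn_def (x : Fin n → ZMod 2) :
    hammingNorm x = (Finset.univ.filter fun i => x i ≠ 0).card := rfl

lemma z2_ne : ∀ a : ZMod 2, a ≠ 0 ↔ a = 1 := by decide

lemma norm_omega : hammingNorm (fun _ : Fin n => (1 : ZMod 2)) = n := by
  rw [hn_def]
  rw [Finset.filter_true_of_mem (fun i _ => one_ne_zero)]
  simp

lemma norm_single (i : Fin n) : hammingNorm ((Pi.single i 1 : Fin n → ZMod 2)) = 1 := by
  rw [hn_def]
  have : (Finset.univ.filter fun j => ((Pi.single i 1 : Fin n → ZMod 2)) j ≠ 0) = {i} := by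
    ext j
    by_cases h : j = i
    · subst h; simp
    · simp [Pi.single_eq_of_ne h, h]
  rw [this, Finset.card_singleton]

lemma norm_add_omega (x : Fin n → ZMod 2) :
    hammingNorm (x + fun _ => (1:ZMod 2)) = n - hammingNorm x := by
  have hz : ∀ a : ZMod 2, a + 1 ≠ 0 ↔ ¬ a ≠ 0 := by decide
  rw [hn_def, hn_def]
  have : (Finset.univ.filter fun j => (x + fun _ => 1 : Fin n → ZMod 2) j ≠ 0)
      = (Finset.univ.filter fun j => x j ≠ 0)ᶜ := by
    ext j
    simp only [Finset.mem_filter, Finset.mem_compl, Finset.mem_univ, true_and, Pi.add_apply]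
    exact hz (x j)
  rw [this, Finset.card_compl, Fintype.card_fin]

lemma norm_pair {i j : Fin n} (hij : i ≠ j) :
    hammingNorm ((Pi.single i 1 : Fin n → ZMod 2) + Pi.single j 1) = 2 := by
  rw [hn_def]
  have : (Finset.univ.filter
      fun k => ((Pi.single i 1 : Fin n → ZMod 2) + (Pi.single j 1 : Fin n → ZMod 2)) k ≠ 0) = {i, j} := by
    ext k
    simp only [Finset.mem_filter, Finset.mem_univ, true_and, Pi.add_apply,
      Finset.mem_insert, Finset.mem_singleton]
    by_cases hki : k = i
    · subst hki
      rw [Pi.single_eq_same, Pi.single_eq_of_ne hij]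
      simp
    · by_cases hkj : k = j
      · subst hkj
        rw [Pi.single_eq_of_ne hki, Pi.single_eq_same]
        simp [hki]
      · rw [Pi.single_eq_of_ne hki, Pi.single_eq_of_ne hkj]
        simp [hki, hkj]
  rw [this, Finset.card_insert_of_notMem (by simp [hij]), Finset.card_singleton]

lemma eq_single_of_norm_one {x : Fin n → ZMod 2} (h : hammingNorm x = 1) :
    ∃ i, x = Pi.single i 1 := by
  rw [hn_def] at h
  obtain ⟨i, hi⟩ := Finset.card_eq_one.mp h
  refine ⟨i, funext fun j => ?_⟩
  have hj := Finset.ext_iff.mp hi j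
  simp only [Finset.mem_filter, Finset.mem_univ, true_and, Finset.mem_singleton] at hj
  by_cases hji : j = i
  · subst hji
    rw [Pi.single_eq_same]
    exact (z2_ne (x j)).mp (hj.mpr rfl)
  · rw [Pi.single_eq_of_ne hji]
    by_contra hne
    exact hji (hj.mp hne)

lemma eq_omega_of_norm_n {x : Fin n → ZMod 2} (h : hammingNorm x = n) :
    x = fun _ => 1 := by
  have h0 : hammingNorm (x + fun _ => (1:ZMod 2)) = 0 := by
    rw [norm_add_omega, h, Nat.sub_self]
  have := hammingNorm_eq_zero.mp h0
  funext i
  have hi := congrFun this i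
  simp only [Pi.add_apply, Pi.zero_apply] at hi
  revert hi
  have : ∀ a : ZMod 2, a + 1 = 0 → a = 1 := by decide
  exact this (x i)

lemma eq_single_omega_of_norm {x : Fin n → ZMod 2} (hn1 : 1 ≤ n)
    (h : hammingNorm x = n - 1) :
    ∃ i, x = (Pi.single i 1 : Fin n → ZMod 2) + fun _ => 1 := by
  have hx : hammingNorm x ≤ n := (hammingNorm_le_card_fintype).trans_eq (Fintype.card_fin n)
  have h1 : hammingNorm (x + fun _ => (1:ZMod 2)) = 1 := by
    rw [norm_add_omega, h]; omega
  obtain ⟨i, hi⟩ := eq_single_of_norm_one h1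
  refine ⟨i, funext fun j => ?_⟩
  have hj := congrFun hi j
  simp only [Pi.add_apply] at hj ⊢
  revert hj
  have : ∀ a b : ZMod 2, a + 1 = b → a = b + 1 := by decide
  exact this (x j) _

lemma exists_perm {x y : Fin n → ZMod 2} (h : hammingNorm x = hammingNorm y) :
    ∃ σ : Equiv.Perm (Fin n), y = x ∘ σ := by
  classical
  have hc1 : Fintype.card {i // y i ≠ 0} = Fintype.card {i // x i ≠ 0} := by
    rw [Fintype.card_subtype, Fintype.card_subtype]
    exact (hn_def y) ▸ (hn_def x) ▸ h.symm
  have e1 : Fintype.card {i // ¬ y i ≠ 0}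
      = Fintype.card (Fin n) - Fintype.card {i // y i ≠ 0} :=
    Fintype.card_subtype_compl _
  have e2 : Fintype.card {i // ¬ x i ≠ 0}
      = Fintype.card (Fin n) - Fintype.card {i // x i ≠ 0} :=
    Fintype.card_subtype_compl _
  have hc2 : Fintype.card {i // ¬ y i ≠ 0} = Fintype.card {i // ¬ x i ≠ 0} := by
    rw [e1, e2, hc1]
  let ep := Fintype.equivOfCardEq hc1
  let en := Fintype.equivOfCardEq hc2
  refine ⟨Equiv.subtypeCongr ep en, funext fun i => ?_⟩
  by_cases hi : y i ≠ 0
  · have h1 : Equiv.subtypeCongr ep en i = ↑(ep ⟨i, hi⟩) := by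
      simp [Equiv.subtypeCongr, hi]
    have h2 : x ((ep ⟨i, hi⟩ : {j // x j ≠ 0}) : Fin n) ≠ 0 := (ep ⟨i, hi⟩).2
    simp only [Function.comp_apply, h1]
    rw [(z2_ne _).mp hi, (z2_ne _).mp h2]
  · have h1 : Equiv.subtypeCongr ep en i = ↑(en ⟨i, hi⟩) := by
      simp [Equiv.subtypeCongr, hi]
    have h2 : ¬ x ((en ⟨i, hi⟩ : {j // ¬ x j ≠ 0}) : Fin n) ≠ 0 := (en ⟨i, hi⟩).2
    simp only [Function.comp_apply, h1]
    rw [not_not] at hi h2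
    rw [hi, h2]

lemma card_weight (k : ℕ) :
    (Finset.univ.filter fun x : Fin n → ZMod 2 => hammingNorm x = k).card
      = n.choose k := by
  classical
  have hpc := Finset.card_powersetCard k (Finset.univ : Finset (Fin n))
  rw [Finset.card_univ, Fintype.card_fin] at hpc
  rw [← hpc]
  apply Finset.card_bij (fun x _ => Finset.univ.filter fun i => x i ≠ 0)
  · intro x hx
    rw [Finset.mem_powersetCard]
    refine ⟨Finset.subset_univ _, ?_⟩
    rw [← hn_def]
    exact (Finset.mem_filter.mp hx).2
  · intro x hx y hy hxy
    funext j
    have hj := Finset.ext_iff.mp hxy j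
    simp only [Finset.mem_filter, Finset.mem_univ, true_and] at hj
    have hval : ∀ a b : ZMod 2, (a ≠ 0 ↔ b ≠ 0) → a = b := by decide
    exact hval _ _ hj
  · intro s hs
    rw [Finset.mem_powersetCard] at hs
    have hfs : (Finset.univ.filter
        fun i => (fun j => if j ∈ s then (1:ZMod 2) else 0) i ≠ 0) = s := by
      ext j
      by_cases hjs : j ∈ s <;> simp [hjs]
    refine ⟨fun j => if j ∈ s then (1:ZMod 2) else 0, ?_, hfs⟩
    rw [Finset.mem_filter]
    exact ⟨Finset.mem_univ _, by rw [hn_def, hfs]; exact hs.2⟩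

lemma choose_two_mono {k : ℕ} (h2 : 2 ≤ k) : k ≤ n / 2 → n.choose 2 ≤ n.choose k := by
  induction k, h2 using Nat.le_induction with
  | base => intro _; exact le_rfl
  | succ m hm ih =>
    intro hk
    exact le_trans (ih (by omega)) (Nat.choose_le_succ_of_lt_half_left (by omega))

lemma choose_big {k : ℕ} (hn : n % 4 = 3) (h2 : 2 ≤ k) (h2' : k ≤ n - 2) :
    2 * n + 2 < n.choose k := by
  have h7 : 7 ≤ n := by omega
  have key : n.choose 2 ≤ n.choose k := by
    rcases le_or_gt k (n / 2) with hk | hk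
    · exact choose_two_mono h2 hk
    · rw [← Nat.choose_symm (by omega : k ≤ n)]
      exact choose_two_mono (by omega) (by omega)
  refine lt_of_lt_of_le ?_ key
  obtain ⟨m, rfl⟩ : ∃ m, n = 4 * m + 3 := ⟨n / 4, by omega⟩
  rw [Nat.choose_two_right]
  have hs : (4 * m + 3) - 1 = 4 * m + 2 := by omega
  rw [hs]
  have hmul : (4 * m + 3) * (4 * m + 2) = 2 * ((4 * m + 3) * (2 * m + 1)) := by ring
  rw [hmul]
  have hdiv : 2 * ((4 * m + 3) * (2 * m + 1)) / 2 = (4 * m + 3) * (2 * m + 1) :=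
    Nat.mul_div_cancel_left _ (by norm_num)
  rw [hdiv]
  have hm1 : 1 ≤ m := by omega
  nlinarith

lemma single_inj : Function.Injective (fun i : Fin n => (Pi.single i 1 : Fin n → ZMod 2)) := by
  intro i j hij
  by_contra hne
  have h := congrFun hij i
  simp only at h
  rw [Pi.single_eq_same, Pi.single_eq_of_ne (Ne.symm ?_)] at h
  · exact one_ne_zero h
  · exact fun e => hne e.symm

lemma single_omega_inj :
    Function.Injective
      (fun i : Fin n => (Pi.single i 1 : Fin n → ZMod 2) + fun _ => 1) := by
  intro i j hij
  apply single_inj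
  simp only at hij ⊢
  funext k
  have h := congrFun hij k
  simp only [Pi.add_apply] at h
  have : ∀ a b : ZMod 2, a + 1 = b + 1 → a = b := by decide
  exact this _ _ h

lemma norm_single_omega (i : Fin n) :
    hammingNorm ((Pi.single i 1 : Fin n → ZMod 2) + fun _ => 1) = n - 1 := by
  rw [norm_add_omega, norm_single]

lemma comp_single (σ : Equiv.Perm (Fin n)) (i : Fin n) :
    (Pi.single i 1 : Fin n → ZMod 2) ∘ σ = Pi.single (σ.symm i) 1 := by
  funext j
  simp only [Function.comp_apply, Pi.single_apply]
  by_cases hc : σ j = i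
  · rw [if_pos hc, if_pos ((Equiv.eq_symm_apply σ).mpr hc)]
  · rw [if_neg hc, if_neg fun hh => hc ((Equiv.eq_symm_apply σ).mp hh)]

lemma norm_le (x : Fin n → ZMod 2) : hammingNorm x ≤ n :=
  hammingNorm_le_card_fintype.trans_eq (Fintype.card_fin n)

end Aux

/-- For `n ≡ 3 (mod 4)`, the set `A₀ = {0, ω, e₁, …, e_n, e₁+ω, …, e_n+ω}` is
the unique subset of `𝔽₂ⁿ` of cardinality `2n + 2` that is invariant under the coordinate
permutation action of `𝔖_n` and such that `wt(x+x')` is not a multiple of `4` for all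
distinct `x, x'` in the set.  Here a subset `A` has the three properties if and only if
`A = A₀`. -/
theorem hurwitzian_set_symmetric_unique (n : ℕ) (hn : n % 4 = 3)
    (A : Finset (Fin n → ZMod 2)) :
    (A.card = 2 * n + 2 ∧
      (∀ σ : Equiv.Perm (Fin n), ∀ x ∈ A, (x ∘ σ) ∈ A) ∧
      (∀ x ∈ A, ∀ x' ∈ A, x ≠ x' → ¬ (4 ∣ hammingNorm (x + x'))))
    ↔ A =
        insert (0 : Fin n → ZMod 2) (insert (fun _ => 1)
          ((Finset.univ.image fun i : Fin n => (Pi.single i 1 : Fin n → ZMod 2)) ∪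
            (Finset.univ.image fun i : Fin n =>
              (Pi.single i 1 : Fin n → ZMod 2) + fun _ => 1))) := by
  classical
  have hn3 : 3 ≤ n := by omega
  -- cardinality of the target set
  have hS1card : (Finset.univ.image fun i : Fin n =>
      (Pi.single i 1 : Fin n → ZMod 2)).card = n := by
    rw [Finset.card_image_of_injective _ single_inj, Finset.card_univ, Fintype.card_fin]
  have hS2card : (Finset.univ.image fun i : Fin n =>
      (Pi.single i 1 : Fin n → ZMod 2) + fun _ => 1).card = n := by
    rw [Finset.card_image_of_injective _ single_omega_inj, Finset.card_univ,
      Fintype.card_fin]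
  have hnormS1 : ∀ z ∈ (Finset.univ.image fun i : Fin n =>
      (Pi.single i 1 : Fin n → ZMod 2)), hammingNorm z = 1 := by
    intro z hz
    rw [Finset.mem_image] at hz
    obtain ⟨i, -, rfl⟩ := hz
    exact norm_single i
  have hnormS2 : ∀ z ∈ (Finset.univ.image fun i : Fin n =>
      (Pi.single i 1 : Fin n → ZMod 2) + fun _ => 1), hammingNorm z = n - 1 := by
    intro z hz
    rw [Finset.mem_image] at hz
    obtain ⟨i, -, rfl⟩ := hz
    exact norm_single_omega i
  have hdisj : Disjoint
      (Finset.univ.image fun i : Fin n => (Pi.single i 1 : Fin n → ZMod 2))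
      (Finset.univ.image fun i : Fin n =>
        (Pi.single i 1 : Fin n → ZMod 2) + fun _ => 1) := by
    rw [Finset.disjoint_left]
    intro z hz1 hz2
    have h1 := hnormS1 z hz1
    have h2 := hnormS2 z hz2
    omega
  have homega_notmem : (fun _ => (1 : ZMod 2)) ∉
      (Finset.univ.image fun i : Fin n => (Pi.single i 1 : Fin n → ZMod 2)) ∪
        (Finset.univ.image fun i : Fin n =>
          (Pi.single i 1 : Fin n → ZMod 2) + fun _ => 1) := by
    intro hz
    rw [Finset.mem_union] at hz
    rcases hz with hz | hz
    · have := hnormS1 _ hz; rw [norm_omega] at this; omega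
    · have := hnormS2 _ hz; rw [norm_omega] at this; omega
  have hzero_notmem : (0 : Fin n → ZMod 2) ∉
      insert (fun _ => (1 : ZMod 2))
        ((Finset.univ.image fun i : Fin n => (Pi.single i 1 : Fin n → ZMod 2)) ∪
          (Finset.univ.image fun i : Fin n =>
            (Pi.single i 1 : Fin n → ZMod 2) + fun _ => 1)) := by
    intro hz
    rw [Finset.mem_insert, Finset.mem_union] at hz
    rcases hz with hz | hz | hz
    · have h01 := congrFun hz ⟨0, by omega⟩
      exact zero_ne_one h01
    · have := hnormS1 _ hz; rw [hammingNorm_zero] at this; omega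
    · have := hnormS2 _ hz; rw [hammingNorm_zero] at this; omega
  have hcardA0 : (insert (0 : Fin n → ZMod 2) (insert (fun _ => 1)
      ((Finset.univ.image fun i : Fin n => (Pi.single i 1 : Fin n → ZMod 2)) ∪
        (Finset.univ.image fun i : Fin n =>
          (Pi.single i 1 : Fin n → ZMod 2) + fun _ => 1)))).card = 2 * n + 2 := by
    rw [Finset.card_insert_of_notMem hzero_notmem,
      Finset.card_insert_of_notMem homega_notmem,
      Finset.card_union_eq_card_add_card.mpr hdisj, hS1card, hS2card]
    omega
  constructor
  · rintro ⟨hcard, hinv, -⟩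
    apply Finset.eq_of_subset_of_card_le
    · intro x hx
      have hxle : hammingNorm x ≤ n := norm_le x
      simp only [Finset.mem_insert, Finset.mem_union, Finset.mem_image,
        Finset.mem_univ, true_and]
      by_cases e0 : hammingNorm x = 0
      · exact Or.inl (hammingNorm_eq_zero.mp e0)
      · by_cases e1 : hammingNorm x = 1
        · obtain ⟨i, rfl⟩ := eq_single_of_norm_one e1
          exact Or.inr (Or.inr (Or.inl ⟨i, rfl⟩))
        · by_cases eN : hammingNorm x = n
          · exact Or.inr (Or.inl (eq_omega_of_norm_n eN))
          · by_cases eN1 : hammingNorm x = n - 1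
            · obtain ⟨i, rfl⟩ := eq_single_omega_of_norm (by omega) eN1
              exact Or.inr (Or.inr (Or.inr ⟨i, rfl⟩))
            · exfalso
              have h2 : 2 ≤ hammingNorm x := by omega
              have h2' : hammingNorm x ≤ n - 2 := by omega
              have hW : (Finset.univ.filter
                  fun y : Fin n → ZMod 2 => hammingNorm y = hammingNorm x) ⊆ A := by
                intro y hy
                have hy' := (Finset.mem_filter.mp hy).2
                obtain ⟨σ, rfl⟩ := exists_perm (x := x) (y := y) hy'.symm
                exact hinv σ x hx
              have hle := Finset.card_le_card hW
              rw [card_weight, hcard] at hle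
              exact absurd hle (not_le.mpr (choose_big hn h2 h2'))
    · rw [hcard, hcardA0]
  · rintro rfl
    refine ⟨hcardA0, ?_, ?_⟩
    · -- invariance
      intro σ x hx
      simp only [Finset.mem_insert, Finset.mem_union, Finset.mem_image,
        Finset.mem_univ, true_and] at hx ⊢
      rcases hx with rfl | rfl | ⟨i, rfl⟩ | ⟨i, rfl⟩
      · exact Or.inl rfl
      · exact Or.inr (Or.inl rfl)
      · exact Or.inr (Or.inr (Or.inl ⟨σ.symm i, (comp_single σ i).symm⟩))
      · refine Or.inr (Or.inr (Or.inr ⟨σ.symm i, ?_⟩))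
        rw [← comp_single σ i]
        rfl
    · -- the mod-4 condition
      intro x hx x' hx' hne
      simp only [Finset.mem_insert, Finset.mem_union, Finset.mem_image,
        Finset.mem_univ, true_and] at hx hx'
      have haddomega : ∀ z : Fin n → ZMod 2,
          hammingNorm (z + fun _ => 1) = n - hammingNorm z := norm_add_omega
      rcases hx with rfl | rfl | ⟨i, rfl⟩ | ⟨i, rfl⟩ <;>
        rcases hx' with rfl | rfl | ⟨j, rfl⟩ | ⟨j, rfl⟩
      · exact absurd rfl hne
      · rw [zero_add, norm_omega]; omega
      · rw [zero_add, norm_single]; omega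
      · rw [zero_add, norm_single_omega]; omega
      · rw [add_zero, norm_omega]; omega
      · exact absurd rfl hne
      · rw [add_comm, norm_single_omega]; omega
      · have e : ((Pi.single j 1 : Fin n → ZMod 2) + fun _ => 1)
            + (fun _ => (1 : ZMod 2)) = Pi.single j 1 := by
          funext k
          simp only [Pi.add_apply]
          have : ∀ a : ZMod 2, (a + 1) + 1 = a := by decide
          exact this _
        rw [add_comm, e, norm_single]; omega
      · rw [add_zero, norm_single]; omega
      · rw [norm_single_omega]; omega
      · have hij : i ≠ j := fun h => hne (by rw [h])
        rw [norm_pair hij]; omega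
      · by_cases hij : i = j
        · subst hij
          have e : (Pi.single i 1 : Fin n → ZMod 2)
              + ((Pi.single i 1 : Fin n → ZMod 2) + fun _ => 1)
              = fun _ => (1 : ZMod 2) := by
            funext k
            simp only [Pi.add_apply]
            have : ∀ a : ZMod 2, a + (a + 1) = 1 := by decide
            exact this _
          rw [e, norm_omega]; omega
        · have e : (Pi.single i 1 : Fin n → ZMod 2)
              + ((Pi.single j 1 : Fin n → ZMod 2) + fun _ => 1)
              = ((Pi.single i 1 : Fin n → ZMod 2) + Pi.single j 1) + fun _ => 1 :=
            (add_assoc _ _ _).symm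
          rw [e, haddomega, norm_pair hij]; omega
      · rw [add_zero, norm_single_omega]; omega
      · have e : ((Pi.single i 1 : Fin n → ZMod 2) + fun _ => 1)
            + (fun _ => (1 : ZMod 2)) = Pi.single i 1 := by
          funext k
          simp only [Pi.add_apply]
          have : ∀ a : ZMod 2, (a + 1) + 1 = a := by decide
          exact this _
        rw [e, norm_single]; omega
      · by_cases hij : i = j
        · subst hij
          have e : ((Pi.single i 1 : Fin n → ZMod 2) + fun _ => 1)
              + Pi.single i 1 = fun _ => (1 : ZMod 2) := by
            funext k
            simp only [Pi.add_apply]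
            have : ∀ a : ZMod 2, (a + 1) + a = 1 := by decide
            exact this _
          rw [e, norm_omega]; omega
        · have e : ((Pi.single i 1 : Fin n → ZMod 2) + fun _ => 1)
              + Pi.single j 1
              = ((Pi.single i 1 : Fin n → ZMod 2) + Pi.single j 1) + fun _ => 1 := by
            funext k
            simp only [Pi.add_apply]
            have : ∀ a b : ZMod 2, (a + 1) + b = (a + b) + 1 := by decide
            exact this _ _
          rw [e, haddomega, norm_pair hij]; omega
      · have hij : i ≠ j := fun h => hne (by rw [h])
        have e : ((Pi.single i 1 : Fin n → ZMod 2) + fun _ => 1)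
            + ((Pi.single j 1 : Fin n → ZMod 2) + fun _ => 1)
            = (Pi.single i 1 : Fin n → ZMod 2) + Pi.single j 1 := by
          funext k
          simp only [Pi.add_apply]
          have : ∀ a b : ZMod 2, (a + 1) + (b + 1) = a + b := by decide
          exact this _ _
        rw [e, norm_pair hij]; omega
end

section
/- Let n ≡ 0 (mod 4) and let A ⊆ 𝔽₂ⁿ be a subset such that for all distinct x, x' ∈ A the Hamming weight wt(x+x') is not a multiple of 4. Then |A| ≤ 2n. (In particular, there is no Hurwitzian set of cardinality ρ(2ⁿ) = 2n+1 in this case.) -/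
/-!
Inside one weight-parity class `C` of `A` all distances are `≡ 2 (mod 4)`. Translating `C` by
one of its points gives `#C - 1` vectors of weight `≡ 2 (mod 4)` with pairwise distances
`≡ 2 (mod 4)`; by `wt (x + y) = wt x + wt y - 2 wt (x * y)` their Gram matrix over `𝔽₂` is
`J - I`. A linear relation among such vectors must have all coefficients equal and involve all of
them, so it exists only when their number is odd. They lie in the even-weight code, of odd
dimension `n - 1`, hence there are at most `n - 1` of them, and each parity class has at most
`n` points.
-/

open Finset Matrix Module

variable {ι : Type*} [Fintype ι]

theorem hammingNorm_add_add_two_mul (x y : ι → ZMod 2) :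
    hammingNorm (x + y) + 2 * hammingNorm (x * y) = hammingNorm x + hammingNorm y := by
  have pointwise (a b : ZMod 2) :
      ((if a + b ≠ 0 then 1 else 0) + 2 * if a * b ≠ 0 then 1 else 0 : ℕ) =
        (if a ≠ 0 then 1 else 0) + if b ≠ 0 then 1 else 0 := by
    revert a b; decide
  simp only [hammingNorm, card_filter, mul_sum, ← sum_add_distrib]
  exact sum_congr rfl fun i _ ↦ pointwise (x i) (y i)

theorem natCast_hammingNorm (x : ι → ZMod 2) : (hammingNorm x : ZMod 2) = ∑ i, x i := by
  have pointwise (a : ZMod 2) : ((if a ≠ 0 then 1 else 0 : ℕ) : ZMod 2) = a := by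
    revert a; decide
  rw [hammingNorm, card_filter, Nat.cast_sum]
  exact sum_congr rfl fun i _ ↦ pointwise (x i)

theorem dotProduct_eq_natCast_hammingNorm_mul (x y : ι → ZMod 2) :
    x ⬝ᵥ y = (hammingNorm (x * y) : ZMod 2) := by
  rw [natCast_hammingNorm]; rfl

theorem hammingNorm_mul_self (x : ι → ZMod 2) : hammingNorm (x * x) = hammingNorm x := by
  have pointwise (a : ZMod 2) : a * a = a := by revert a; decide
  simp only [hammingNorm, Pi.mul_apply, pointwise]

theorem even_hammingNorm_add_iff (x y : ι → ZMod 2) :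
    Even (hammingNorm (x + y)) ↔ (Even (hammingNorm x) ↔ Even (hammingNorm y)) := by
  rw [← Nat.even_add, ← hammingNorm_add_add_two_mul]
  simp [Nat.even_add]

variable (ι) in
def evenWeight : Submodule (ZMod 2) (ι → ZMod 2) :=
  LinearMap.ker (∑ i, LinearMap.proj i)

theorem mem_evenWeight {x : ι → ZMod 2} : x ∈ evenWeight ι ↔ Even (hammingNorm x) := by
  simp [evenWeight, ← ZMod.natCast_eq_zero_iff_even, natCast_hammingNorm]

theorem finrank_evenWeight_add_one [Nonempty ι] :
    finrank (ZMod 2) (evenWeight ι) + 1 = Fintype.card ι := by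
  classical
  let φ : (ι → ZMod 2) →ₗ[ZMod 2] ZMod 2 := ∑ i, LinearMap.proj i
  have hφ : LinearMap.range φ = ⊤ :=
    LinearMap.range_eq_top.mpr fun c ↦ ⟨Pi.single (Classical.arbitrary ι) c, by simp [φ]⟩
  have := LinearMap.finrank_range_add_finrank_ker φ
  rw [hφ, finrank_top, finrank_self, finrank_fintype_fun_eq_card] at this
  change finrank (ZMod 2) (LinearMap.ker φ) + 1 = _
  omega

section Gram

variable {S : Finset (ι → ZMod 2)}

theorem sum_smul_dotProduct_of_gram 
    (hS : ∀ x ∈ S, ∀ y ∈ S, x ⬝ᵥ y = if x = y then 0 else 1)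
    {T : Finset (ι → ZMod 2)} (hT : T ⊆ S)
    (f : (ι → ZMod 2) → ZMod 2) {y : ι → ZMod 2} (hy : y ∈ S) :
    (∑ x ∈ T, f x • x) ⬝ᵥ y = ∑ x ∈ T, f x - if y ∈ T then f y else 0 := by
  rw [sum_dotProduct, ← sum_ite_eq', ← sum_sub_distrib]
  refine sum_congr rfl fun x hx ↦ ?_
  rw [smul_dotProduct, hS x (hT hx) y hy]
  split_ifs <;> simp

theorem linearIndepOn_of_gram_of_ssubset 
    (hS : ∀ x ∈ S, ∀ y ∈ S, x ⬝ᵥ y = if x = y then 0 else 1)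
    {T : Finset (ι → ZMod 2)} (hT : T ⊂ S) :
    LinearIndepOn (ZMod 2) id (T : Set (ι → ZMod 2)) := by
  refine linearIndepOn_finset_iff.mpr fun f (hf : ∑ x ∈ T, f x • x = 0) x hx ↦ ?_
  have hdot {z} (hz : z ∈ S) : ∑ x ∈ T, f x - (if z ∈ T then f z else 0) = 0 := by
    rw [← sum_smul_dotProduct_of_gram hS hT.subset f hz, hf, zero_dotProduct]
  obtain ⟨y, hyS, hyT⟩ := exists_of_ssubset hT
  have hsum := hdot hyS
  have hx' := hdot (hT.subset hx)
  rw [if_neg hyT, sub_zero] at hsum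
  rwa [if_pos hx, hsum, zero_sub, neg_eq_zero] at hx'

theorem linearIndepOn_of_gram_of_even_card 
    (hS : ∀ x ∈ S, ∀ y ∈ S, x ⬝ᵥ y = if x = y then 0 else 1)
    (hS_even : Even #S) :
    LinearIndepOn (ZMod 2) id (S : Set (ι → ZMod 2)) := by
  refine linearIndepOn_finset_iff.mpr fun f (hf : ∑ x ∈ S, f x • x = 0) x hx ↦ ?_
  have hdot {z} (hz : z ∈ S) : f z = ∑ x ∈ S, f x := by
    have := sum_smul_dotProduct_of_gram hS subset_rfl f hz
    rw [hf, zero_dotProduct, if_pos hz] at this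
    exact (sub_eq_zero.mp this.symm).symm
  have hsum : ∑ x ∈ S, f x = 0 := by
    rw [sum_congr rfl fun z hz ↦ hdot hz, sum_const, nsmul_eq_mul,
      ZMod.natCast_eq_zero_iff_even.mpr hS_even, zero_mul]
  rw [hdot hx, hsum]

theorem card_le_finrank_of_gram 
    (hS : ∀ x ∈ S, ∀ y ∈ S, x ⬝ᵥ y = if x = y then 0 else 1)
    {W : Submodule (ZMod 2) (ι → ZMod 2)} (hSW : (S : Set (ι → ZMod 2)) ⊆ W)
    (hW : Odd (finrank (ZMod 2) W)) :
    #S ≤ finrank (ZMod 2) W := by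
  have card_le {T : Finset (ι → ZMod 2)} (hTS : T ⊆ S)
      (hT : LinearIndepOn (ZMod 2) id (T : Set (ι → ZMod 2))) : #T ≤ finrank (ZMod 2) W := by
    rw [← finrank_span_finset_eq_card hT]
    exact Submodule.finrank_mono (Submodule.span_le.mpr ((coe_subset.mpr hTS).trans hSW))
  obtain rfl | ⟨t, ht⟩ := S.eq_empty_or_nonempty
  · simp
  have h_erase := card_le (erase_subset t S)
    (linearIndepOn_of_gram_of_ssubset hS (erase_ssubset ht))
  rw [card_erase_of_mem ht] at h_erase
  by_contra! h_lt
  have h_card : #S = finrank (ZMod 2) W + 1 := by omega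
  have h_even : Even #S := h_card ▸ hW.add_one
  exact h_lt.not_ge (card_le subset_rfl (linearIndepOn_of_gram_of_even_card hS h_even))

end Gram

theorem dotProduct_self_eq_zero_of_even {x : ι → ZMod 2} (hx : Even (hammingNorm x)) :
    x ⬝ᵥ x = 0 := by
  rwa [dotProduct_eq_natCast_hammingNorm_mul, hammingNorm_mul_self, ZMod.natCast_eq_zero_iff_even]

theorem dotProduct_eq_one_of_hammingNorm_mod_four {x y : ι → ZMod 2}
    (hx : hammingNorm x % 4 = 2) (hy : hammingNorm y % 4 = 2) (hxy : hammingNorm (x + y) % 4 = 2) :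
    x ⬝ᵥ y = 1 := by
  have := hammingNorm_add_add_two_mul x y
  rw [dotProduct_eq_natCast_hammingNorm_mul, ZMod.natCast_eq_one_iff_odd, Nat.odd_iff]
  omega

theorem card_lt_of_hammingNorm_mod_four_eq_two [Nonempty ι] (hι : Even (Fintype.card ι))
    {S : Finset (ι → ZMod 2)} (hS : ∀ x ∈ S, hammingNorm x % 4 = 2)
    (hS_add : ∀ x ∈ S, ∀ y ∈ S, x ≠ y → hammingNorm (x + y) % 4 = 2) :
    #S < Fintype.card ι := by
  have h_even {x} (hx : x ∈ S) : Even (hammingNorm x) :=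
    Nat.even_iff.mpr (by have := hS x hx; omega)
  have h_gram : ∀ x ∈ S, ∀ y ∈ S, x ⬝ᵥ y = if x = y then 0 else 1 := by
    intro x hx y hy
    split_ifs with hxy
    · exact hxy ▸ dotProduct_self_eq_zero_of_even (h_even hx)
    · exact dotProduct_eq_one_of_hammingNorm_mod_four (hS x hx) (hS y hy) (hS_add x hx y hy hxy)
  have h_dim := finrank_evenWeight_add_one (ι := ι)
  have h_odd : Odd (finrank (ZMod 2) (evenWeight ι)) := by
    rw [Nat.odd_iff]; rw [Nat.even_iff] at hι; omega
  have := card_le_finrank_of_gram h_gram (fun x hx ↦ mem_evenWeight.mpr (h_even hx)) h_odd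
  omega

theorem card_le_of_hammingNorm_add_mod_four_eq_two [Nonempty ι] (hι : Even (Fintype.card ι))
    {C : Finset (ι → ZMod 2)}
    (hC : ∀ x ∈ C, ∀ y ∈ C, x ≠ y → hammingNorm (x + y) % 4 = 2) :
    #C ≤ Fintype.card ι := by
  obtain rfl | ⟨a, ha⟩ := C.eq_empty_or_nonempty
  · simp
  have h_cancel (x y : ι → ZMod 2) : x + a + (y + a) = x + y := by
    rw [add_add_add_comm, ZModModule.add_self, add_zero]
  set S := (C.erase a).image (· + a)
  have hS : ∀ s ∈ S, hammingNorm s % 4 = 2 := by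
    simp only [S, mem_image, mem_erase]
    rintro _ ⟨x, ⟨hxa, hx⟩, rfl⟩
    exact hC x hx a ha hxa
  have hS_add : ∀ s ∈ S, ∀ t ∈ S, s ≠ t → hammingNorm (s + t) % 4 = 2 := by
    simp only [S, mem_image, mem_erase]
    rintro _ ⟨x, ⟨-, hx⟩, rfl⟩ _ ⟨y, ⟨-, hy⟩, rfl⟩ hxy
    rw [h_cancel]
    exact hC x hx y hy (by rintro rfl; exact hxy rfl)
  have := card_lt_of_hammingNorm_mod_four_eq_two hι hS hS_add
  rw [card_image_of_injective _ (add_left_injective a), card_erase_of_mem ha] at this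
  omega

/-- For `n ≡ 0 (mod 4)` (with `n ≥ 1`), any subset `A ⊆ 𝔽₂ⁿ` such that the
Hamming weight of `x + x'` is not a multiple of `4` for all distinct `x, x' ∈ A` satisfies
`|A| ≤ 2n`; in particular there is no Hurwitzian set of cardinality `ρ(2ⁿ) = 2n + 1` in
this case. -/
theorem no_hurwitzian_set_zero_mod_four (n : ℕ) (hn : 1 ≤ n) (h4 : n % 4 = 0)
    (A : Finset (Fin n → ZMod 2))
    (hA : ∀ x ∈ A, ∀ x' ∈ A, x ≠ x' → ¬ (4 ∣ hammingNorm (x + x'))) :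
    A.card ≤ 2 * n := by
  have : Nonempty (Fin n) := ⟨⟨0, hn⟩⟩
  have hn_even : Even (Fintype.card (Fin n)) := by
    rw [Fintype.card_fin, Nat.even_iff]; omega
  have h_class (C : Finset (Fin n → ZMod 2)) (hCA : C ⊆ A)
      (hC : ∀ x ∈ C, ∀ y ∈ C, (Even (hammingNorm x) ↔ Even (hammingNorm y))) :
      #C ≤ n := by
    refine (card_le_of_hammingNorm_add_mod_four_eq_two hn_even fun x hx y hy hxy ↦ ?_).trans_eq
      (Fintype.card_fin n)
    have h_even := (even_hammingNorm_add_iff x y).mpr (hC x hx y hy)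
    have := hA x (hCA hx) y (hCA hy) hxy
    rw [Nat.even_iff] at h_even
    omega
  calc #A = #(A.filter fun x ↦ Even (hammingNorm x))
        + #(A.filter fun x ↦ ¬Even (hammingNorm x)) := (card_filter_add_card_filter_not _).symm
    _ ≤ n + n := by
      gcongr <;> refine h_class _ (filter_subset _ A) fun x hx y hy ↦ ?_ <;>
        simp only [mem_filter] at hx hy
      exacts [iff_of_true hx.2 hy.2, iff_of_false hx.2 hy.2]
    _ = 2 * n := (two_mul n).symm
end

section
/- Let ℱ be a family of subsets of {1,2,…,n}, each of even cardinality and containing the empty set, such that for all distinct F, F' ∈ ℱ the cardinality of the symmetric difference F ⊕ F' is not a multiple of 4. Then every nonempty F ∈ ℱ satisfies |F| ≡ 2 (mod 4), any two distinct nonempty F, F' ∈ ℱ satisfy that |F ∩ F'| is odd, and |ℱ| ≤ n + 1. -/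
open Finset

section
variable (n : ℕ)

private def dotl (w : (Fin n → ZMod 2) × ZMod 2) :
    ((Fin n → ZMod 2) × ZMod 2) →ₗ[ZMod 2] ZMod 2 where
  toFun x := (∑ i, x.1 i * w.1 i) + x.2 * w.2
  map_add' x y := by
    simp only [Prod.fst_add, Pi.add_apply, Prod.snd_add, add_mul, Finset.sum_add_distrib]
    ring
  map_smul' c x := by
    simp only [Prod.smul_fst, Prod.smul_snd, Pi.smul_apply, smul_eq_mul, RingHom.id_apply,
      mul_assoc, Finset.mul_sum, mul_add]

private def uvec (F : Finset (Fin n)) : (Fin n → ZMod 2) × ZMod 2 :=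
  (fun i => if i ∈ F then 1 else 0, 1)

private lemma dotl_uvec (F G : Finset (Fin n)) :
    dotl n (uvec n G) (uvec n F) = ((F ∩ G).card : ZMod 2) + 1 := by
  have : ∀ i : Fin n, (if i ∈ F then (1 : ZMod 2) else 0) * (if i ∈ G then 1 else 0)
      = if i ∈ F ∩ G then 1 else 0 := by
    intro i; by_cases h1 : i ∈ F <;> by_cases h2 : i ∈ G <;> simp [h1, h2]
  simp only [dotl, uvec, LinearMap.coe_mk, AddHom.coe_mk, this, mul_one]
  rw [Finset.sum_ite_mem, Finset.univ_inter, Finset.sum_const]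
  simp

private def phiL : ((Fin n → ZMod 2) × ZMod 2) →ₗ[ZMod 2] ZMod 2 where
  toFun x := ∑ i, x.1 i
  map_add' x y := by simp [Finset.sum_add_distrib]
  map_smul' c x := by simp [Finset.mul_sum]

end

private lemma card_symmDiff_aux {n : ℕ} (F G : Finset (Fin n)) :
    (symmDiff F G).card + 2 * (F ∩ G).card = F.card + G.card := by
  have h1 : symmDiff F G = (F ∪ G) \ (F ∩ G) := symmDiff_eq_sup_sdiff_inf F G
  have h2 : (F ∩ G) ⊆ (F ∪ G) := (inter_subset_left).trans subset_union_left
  have h3 : (symmDiff F G).card = (F ∪ G).card - (F ∩ G).card := by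
    rw [h1, Finset.card_sdiff_of_subset h2]
  have h4 := Finset.card_union_add_card_inter F G
  have h5 : (F ∩ G).card ≤ (F ∪ G).card := Finset.card_le_card h2
  omega

/-- Let `ℱ` be a family of subsets of `{1,…,n}`, each of even cardinality and
containing the empty set, such that `|F ⊕ F'|` is not a multiple of `4` for all distinct
`F, F' ∈ ℱ`.  Then every nonempty `F ∈ ℱ` has `|F| ≡ 2 (mod 4)`, any two distinct nonempty
members intersect in an odd number of elements, and `|ℱ| ≤ n + 1`. -/
theorem oddtown_argument (n : ℕ) (ℱ : Finset (Finset (Fin n)))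
    (heven : ∀ F ∈ ℱ, Even F.card) (hempty : ∅ ∈ ℱ)
    (h : ∀ F ∈ ℱ, ∀ F' ∈ ℱ, F ≠ F' → ¬ (4 ∣ (symmDiff F F').card)) :
    (∀ F ∈ ℱ, F ≠ ∅ → F.card % 4 = 2) ∧
    (∀ F ∈ ℱ, ∀ F' ∈ ℱ, F ≠ ∅ → F' ≠ ∅ → F ≠ F' → Odd (F ∩ F').card) ∧
    ℱ.card ≤ n + 1 := by
  have part1 : ∀ F ∈ ℱ, F ≠ ∅ → F.card % 4 = 2 := by
    intro F hF hne
    have hd := h F hF ∅ hempty hne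
    have he : symmDiff F (∅ : Finset (Fin n)) = F := by
      simp [symmDiff_eq_sup_sdiff_inf]
    rw [he] at hd
    obtain ⟨k, hk⟩ := heven F hF
    omega
  have part2 : ∀ F ∈ ℱ, ∀ G ∈ ℱ, F ≠ ∅ → G ≠ ∅ → F ≠ G → (F ∩ G).card % 2 = 1 := by
    intro F hF G hG hFne hGne hne
    have hd := h F hF G hG hne
    have hc := card_symmDiff_aux F G
    have h1 := part1 F hF hFne
    have h2 := part1 G hG hGne
    omega
  refine ⟨part1, fun F hF G hG hFne hGne hne => Nat.odd_iff.2 (part2 F hF G hG hFne hGne hne), ?_⟩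
  rcases Nat.eq_zero_or_pos n with hn | hn
  · subst hn
    have : ℱ ⊆ {∅} := by
      intro F _
      simp [Finset.eq_empty_of_isEmpty F]
    calc ℱ.card ≤ ({∅} : Finset (Finset (Fin 0))).card := Finset.card_le_card this
      _ ≤ 1 := by simp
  · -- n ≥ 1
    haveI : Fact (Nat.Prime 2) := ⟨Nat.prime_two⟩
    have KK := LinearMap.ker (phiL n)
    -- cast facts
    have castcard : ∀ {F G : Finset (Fin n)}, F ∈ ℱ → G ∈ ℱ → F ≠ ∅ → G ≠ ∅ →
        dotl n (uvec n G) (uvec n F) = if F = G then 1 else 0 := by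
      intro F G hF hG hFne hGne
      rw [dotl_uvec]
      by_cases hfg : F = G
      · subst hfg
        obtain ⟨k, hk⟩ := heven F hF
        have hc : ((F ∩ F).card : ZMod 2) = 0 := by
          rw [Finset.inter_self]
          exact (ZMod.natCast_eq_zero_iff _ 2).2 ⟨k, by omega⟩
        rw [if_pos rfl, hc, zero_add]
      · have hc : (((F ∩ G)).card : ZMod 2) = 1 := by
          rw [← ZMod.natCast_mod, part2 F hF G hG hFne hGne hfg, Nat.cast_one]
        rw [if_neg hfg, hc, one_add_one_eq_two]
        exact_mod_cast ZMod.natCast_self 2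
    -- linear independence
    have hind : LinearIndependent (ZMod 2)
        (fun F : {F // F ∈ ℱ.erase ∅} => uvec n F.1) := by
      rw [Fintype.linearIndependent_iff]
      intro g hg G
      have hmem : ∀ i : {F // F ∈ ℱ.erase ∅}, i.1 ∈ ℱ ∧ i.1 ≠ ∅ := by
        intro i
        have := i.2
        rw [Finset.mem_erase] at this
        exact ⟨this.2, this.1⟩
      have h0 := congrArg (dotl n (uvec n G.1)) hg
      rw [map_sum, map_zero] at h0
      simp only [map_smul, smul_eq_mul] at h0
      have hrw : ∀ i : {F // F ∈ ℱ.erase ∅},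
          g i * dotl n (uvec n G.1) (uvec n i.1) = g i * (if i = G then 1 else 0) := by
        intro i
        rw [castcard (hmem i).1 (hmem G).1 (hmem i).2 (hmem G).2]
        congr 1
        by_cases hig : i = G
        · simp [hig]
        · rw [if_neg hig, if_neg (fun hc => hig (Subtype.ext hc))]
      rw [Finset.sum_congr rfl (fun i _ => hrw i)] at h0
      simpa using h0
    -- membership in kernel
    have hker : ∀ F ∈ ℱ, uvec n F ∈ LinearMap.ker (phiL n) := by
      intro F hF
      rw [LinearMap.mem_ker]
      obtain ⟨k, hk⟩ := heven F hF
      show (∑ i, (uvec n F).1 i) = 0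
      simp only [uvec]
      rw [Finset.sum_ite_mem, Finset.univ_inter, Finset.sum_const, nsmul_eq_mul, mul_one,
        ← ZMod.natCast_mod, show F.card % 2 = 0 by omega, Nat.cast_zero]
    have hindK : LinearIndependent (ZMod 2)
        (fun F : {F // F ∈ ℱ.erase ∅} => (⟨uvec n F.1, hker F.1 (by
          have := F.2; rw [Finset.mem_erase] at this; exact this.2)⟩ : LinearMap.ker (phiL n))) :=
      hind.of_comp (LinearMap.ker (phiL n)).subtype
    -- finrank of kernel
    have hsurj : Function.Surjective (phiL n) := by
      intro c
      refine ⟨(Pi.single ⟨0, hn⟩ c, 0), ?_⟩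
      show (∑ i : Fin n, (Pi.single (⟨0, hn⟩ : Fin n) c : Fin n → ZMod 2) i) = c
      rw [Finset.sum_pi_single']
      simp
    have hrank : Module.finrank (ZMod 2) (LinearMap.ker (phiL n)) = n := by
      have h1 := LinearMap.finrank_range_add_finrank_ker (phiL n)
      have h2 : Module.finrank (ZMod 2) ((Fin n → ZMod 2) × ZMod 2) = n + 1 := by
        rw [Module.finrank_prod, Module.finrank_self, Module.finrank_fintype_fun_eq_card]
        simp
      rw [LinearMap.range_eq_top.2 hsurj, finrank_top, Module.finrank_self, h2] at h1
      omega
    have hcard := hindK.fintype_card_le_finrank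
    rw [Fintype.card_coe, hrank, Finset.card_erase_of_mem hempty] at hcard
    have : 1 ≤ ℱ.card := Finset.card_pos.2 ⟨∅, hempty⟩
    omega
end

section
/- There is a constant C > 0 such that the following holds: for every n, every cubic form α : 𝔽₂ⁿ → 𝔽₂, and all finite subsets A, B ⊆ 𝔽₂ⁿ with 1 ≤ |A| ≤ |B|, if every proper additive quadruple (x, x', y, y') with x, x' ∈ A, y, y' ∈ B satisfies α(x + x') = 1, then |A + B| ≥ C · |A|^{6/5}. -/
/-!
For `t ∈ A + B` put `X_t = {a ∈ A | t - a ∈ B}`. The sum of a cubic form over the fifteen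
pairwise sums of six vectors adding up to zero vanishes. For six distinct elements of `X_t` with
zero sum, each pair `x ≠ x'` among them gives the proper quadruple `(x, x', t - x, t - x')`, so all
fifteen values would be `1`: hence every zero-sum 6-tuple in `X_t` has a repeated entry, and there
are at most `30 |X_t|^4` of them. Since `X_t ⊆ t - B`, Cauchy–Schwarz bounds `|X_t|^6` by `|3B|`
times that number, so `|X_t|^2 ≤ 30 |3B|`, while Plünnecke–Ruzsa gives `|A|^2 |3B| ≤ |A + B|^3`.
Choosing `t` with `|X_t| ≥ |A||B| / |A + B| ≥ |A|^2 / |A + B|` yields `|A|^6 ≤ 30 |A + B|^5`.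
-/

open Pointwise

namespace Finset

theorem sum_filter_lt_add_swap_add_sum_diag {ι M : Type*} [Fintype ι] [LinearOrder ι]
    [AddCommMonoid M] (f : ι → ι → M) :
    ∑ p : ι × ι with p.1 < p.2, (f p.1 p.2 + f p.2 p.1) + ∑ a, f a a = ∑ a, ∑ b, f a b := by
  have hsplit : ∀ a b, f a b =
      ((if a < b then f a b else 0) + if b < a then f a b else 0) + if a = b then f a b else 0 := by
    intro a b
    rcases lt_trichotomy a b with h | rfl | h
    · simp [h, h.not_gt, h.ne]
    · simp
    · simp [h, h.not_gt, h.ne']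
  conv_rhs => enter [2, a, 2, b]; rw [hsplit a b]
  simp only [sum_add_distrib, sum_ite_eq, mem_univ, if_true, sum_filter, Fintype.sum_prod_type]
  rw [sum_comm (f := fun a b => if b < a then f a b else 0), ← sum_add_distrib]

theorem sum_filter_lt_add_mul_add_mul_add_eq_zero {ι R : Type*} [Fintype ι] [LinearOrder ι]
    [CommRing R] [CharP R 2] (hι : Even (Fintype.card ι)) {x y z : ι → R}
    (hx : ∑ a, x a = 0) (hy : ∑ a, y a = 0) (hz : ∑ a, z a = 0) :
    ∑ p : ι × ι with p.1 < p.2, (x p.1 + x p.2) * (y p.1 + y p.2) * (z p.1 + z p.2) = 0 := by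
  -- The summand is `g a b + g b a` for `g a b = x a * (y a + y b) * (z a + z b)`, whose double
  -- sum is `card ι * ∑ a, x a * y a * z a` and whose diagonal vanishes in characteristic 2.
  have hcard : (Fintype.card ι : R) = 0 := by
    rw [CharP.cast_eq_zero_iff R 2]; exact even_iff_two_dvd.mp hι
  have hinner (a : ι) : ∑ b, x a * (y a + y b) * (z a + z b) =
      x a * (Fintype.card ι * (y a * z a)) + x a * ∑ b, y b * z b := by
    have hexp (b : ι) : x a * (y a + y b) * (z a + z b) = x a * (y a * z a) +
        x a * y a * z b + x a * z a * y b + x a * (y b * z b) := by ring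
    simp only [hexp, sum_add_distrib, ← mul_sum, hy, hz, sum_const, card_univ, nsmul_eq_mul]
    ring
  have hfull : ∑ a, ∑ b, x a * (y a + y b) * (z a + z b) = 0 := by
    simp only [hinner, hcard, sum_add_distrib, ← sum_mul, hx]
    simp
  have hdiag : ∑ a, x a * (y a + y a) * (z a + z a) = 0 := by
    simp [CharTwo.add_self_eq_zero]
  rw [← hfull, ← sum_filter_lt_add_swap_add_sum_diag, hdiag, add_zero]
  exact sum_congr rfl fun p _ => by ring

theorem sq_card_le_card_mul_card_filter_eq {α β : Type*} [DecidableEq β] (s : Finset α)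
    (t : Finset β) {f : α → β} (hf : ∀ a ∈ s, f a ∈ t) :
    #s ^ 2 ≤ #t * #{p ∈ s ×ˢ s | f p.1 = f p.2} := by
  calc #s ^ 2 = (∑ c ∈ t, #{a ∈ s | f a = c}) ^ 2 := by rw [card_eq_sum_card_fiberwise hf]
    _ ≤ #t * ∑ c ∈ t, #{a ∈ s | f a = c} ^ 2 := sq_sum_le_card_mul_sum_sq
    _ = #t * #{p ∈ s ×ˢ s | f p.1 = f p.2} := by
      rw [card_eq_sum_card_fiberwise (f := fun p => f p.1) (t := t)
        fun p hp => hf _ (mem_product.1 (mem_filter.1 hp).1).1]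
      congr 1
      refine sum_congr rfl fun c _ => ?_
      rw [sq, ← card_product, filter_filter, ← filter_product]
      congr 1
      refine filter_congr fun p _ => ?_
      grind

section AddCommGroup
variable {G : Type*} [AddCommGroup G] [DecidableEq G]

theorem sum_card_filter_sub_mem_eq_card_mul_card (A B : Finset G) :
    ∑ t ∈ A + B, #{a ∈ A | t - a ∈ B} = #A * #B := by
  rw [← card_product, card_eq_sum_card_fiberwise (f := fun p : G × G => p.1 + p.2)
    fun p hp => add_mem_add (mem_product.1 hp).1 (mem_product.1 hp).2]
  refine sum_congr rfl fun t _ => card_bij' (fun a _ => (a, t - a)) (fun p _ => p.1) ?_ ?_ ?_ ?_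
  · intro a ha
    rw [mem_filter] at ha ⊢
    exact ⟨mem_product.2 ⟨ha.1, ha.2⟩, add_sub_cancel _ _⟩
  · rintro ⟨a, b⟩ hp
    obtain ⟨hab, rfl⟩ := mem_filter.1 hp
    exact mem_filter.2 ⟨(mem_product.1 hab).1, by simpa using (mem_product.1 hab).2⟩
  · exact fun _ _ => rfl
  · rintro ⟨a, b⟩ hp
    obtain ⟨-, rfl⟩ := mem_filter.1 hp
    simp

theorem card_pow_le_card_nsmul_mul_card_filter_sum_eq (k : ℕ) {B X : Finset G} {t : G}
    (hX : ∀ x ∈ X, t - x ∈ B) :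
    #X ^ (2 * k) ≤ #(k • B) * #{p ∈ Fintype.piFinset (fun _ : Fin k => X) ×ˢ
      Fintype.piFinset (fun _ : Fin k => X) | ∑ i, p.1 i = ∑ i, p.2 i} := by
  have hmem : ∀ u ∈ Fintype.piFinset (fun _ : Fin k => X), ∑ i, (t - u i) ∈ k • B := by
    intro u hu
    rw [← mem_coe, coe_nsmul, Set.mem_nsmul_iff_sum]
    exact ⟨_, fun i => hX _ (Fintype.mem_piFinset.1 hu i), rfl⟩
  have := sq_card_le_card_mul_card_filter_eq _ _ hmem
  rw [Fintype.card_piFinset_const, ← pow_mul, mul_comm] at this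
  convert this using 3
  refine filter_congr fun p _ => ?_
  simp only [sum_sub_distrib, sub_right_inj]

variable (ι : Type*) [Fintype ι] [DecidableEq ι]

def zeroSumTuples (X : Finset G) : Finset (ι → G) :=
  {u ∈ Fintype.piFinset fun _ : ι => X | ∑ i, u i = 0}

variable {ι}

theorem card_filter_apply_eq_apply_le {a b e : ι} (hab : a ≠ b) (hea : e ≠ a) (heb : e ≠ b)
    (X : Finset G) : #{u ∈ zeroSumTuples ι X | u a = u b} ≤ #X ^ (Fintype.card ι - 2) := by
  -- Coordinates `a` and `e` are recovered from the others: `u a = u b`, `u e = -∑_{i ≠ e} u i`.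
  let S : Finset ι := {a, e}ᶜ
  have hcard : #X ^ (Fintype.card ι - 2) = #(Fintype.piFinset fun _ : S => X) := by
    rw [Fintype.card_piFinset, prod_const, card_univ, Fintype.card_coe, card_compl,
      card_pair hea.symm]
  rw [hcard]
  refine card_le_card_of_injOn (fun u i => u i) (fun u hu => ?_) fun u hu v hv huv => ?_
  · simp only [zeroSumTuples, mem_coe, mem_filter, Fintype.mem_piFinset] at hu
    exact Fintype.mem_piFinset.2 fun i => hu.1.1 i
  · simp only [zeroSumTuples, mem_coe, mem_filter] at hu hv
    have hoff (i : ι) (hia : i ≠ a) (hie : i ≠ e) : u i = v i :=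
      congrFun huv ⟨i, by simp [S, hia, hie]⟩
    have hne (i : ι) (hie : i ≠ e) : u i = v i := by
      obtain rfl | hia := eq_or_ne i a
      · rw [hu.2, hv.2]; exact hoff b hab.symm heb.symm
      · exact hoff i hia hie
    have he : u e = v e := by
      have hsum (w : ι → G) : ∑ i, w i = w e + ∑ i ∈ univ.erase e, w i :=
        (add_sum_erase _ _ (mem_univ e)).symm
      have := hu.1.2.trans hv.1.2.symm
      rwa [hsum u, hsum v, sum_congr rfl fun i hi => hne i (ne_of_mem_erase hi),
        add_left_inj] at this
    funext i
    obtain rfl | hie := eq_or_ne i e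
    · exact he
    · exact hne i hie

theorem card_zeroSumTuples_le (hι : 3 ≤ Fintype.card ι) {X : Finset G}
    (hX : ∀ u ∈ zeroSumTuples ι X, ¬ Function.Injective u) :
    #(zeroSumTuples ι X) ≤
      Fintype.card ι * (Fintype.card ι - 1) * #X ^ (Fintype.card ι - 2) := by
  calc #(zeroSumTuples ι X)
      ≤ #((univ : Finset ι).offDiag.biUnion fun p => {u ∈ zeroSumTuples ι X | u p.1 = u p.2}) := by
        refine card_le_card fun u hu => ?_
        obtain ⟨a, b, hab, hne⟩ := Function.not_injective_iff.1 (hX u hu)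
        exact mem_biUnion.2 ⟨(a, b), by simpa using hne, mem_filter.2 ⟨hu, hab⟩⟩
    _ ≤ ∑ p ∈ (univ : Finset ι).offDiag, #{u ∈ zeroSumTuples ι X | u p.1 = u p.2} :=
        card_biUnion_le
    _ ≤ ∑ p ∈ (univ : Finset ι).offDiag, #X ^ (Fintype.card ι - 2) := by
        refine sum_le_sum fun p hp => ?_
        have hlt : #({p.1, p.2} : Finset ι) < #(univ : Finset ι) := by
          rw [card_univ]; exact (card_le_two).trans_lt hι
        obtain ⟨e, -, he⟩ := exists_mem_notMem_of_card_lt_card hlt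
        simp only [mem_insert, mem_singleton, not_or] at he
        exact card_filter_apply_eq_apply_le (mem_offDiag.1 hp).2.2 he.1 he.2 X
    _ = _ := by
        rw [sum_const, offDiag_card, card_univ, smul_eq_mul, Nat.mul_sub_one]

theorem card_pow_mul_card_nsmul_le {A : Finset G} (hA : A.Nonempty) (B : Finset G) (n : ℕ) :
    #A ^ n * #(n • B) ≤ #A * #(A + B) ^ n := by
  have hP := pluennecke_ruzsa_inequality_nsmul_add hA B n
  rw [div_pow, div_mul_eq_mul_div, le_div_iff₀ (pow_pos (by exact_mod_cast hA.card_pos) n),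
    mul_comm] at hP
  exact_mod_cast hP.trans_eq (mul_comm _ _)

end AddCommGroup

section CharTwo
variable {G : Type*} [AddCommGroup G] [Module (ZMod 2) G] [DecidableEq G]

theorem card_filter_sum_eq_sum_le_card_zeroSumTuples (X : Finset G) (m k : ℕ) :
    #{p ∈ Fintype.piFinset (fun _ : Fin m => X) ×ˢ Fintype.piFinset (fun _ : Fin k => X) |
      ∑ i, p.1 i = ∑ i, p.2 i} ≤ #(zeroSumTuples (Fin (m + k)) X) := by
  refine card_le_card_of_injOn (fun p => Fin.append p.1 p.2) (fun p hp => ?_)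
    (Fin.appendEquiv m k).injective.injOn
  simp only [coe_filter, mem_product, Fintype.mem_piFinset] at hp
  simp only [zeroSumTuples, mem_coe, mem_filter, Fintype.mem_piFinset]
  refine ⟨Fin.addCases (by simpa using hp.1.1) (by simpa using hp.1.2), ?_⟩
  rw [Fin.sum_univ_add]
  simp [hp.2, ZModModule.add_self]

end CharTwo

end Finset

open Finset

def IsOneOnProperQuadruples {n : ℕ} (α : (Fin n → ZMod 2) → ZMod 2)
    (A B : Finset (Fin n → ZMod 2)) : Prop :=
  ∀ x ∈ A, ∀ x' ∈ A, ∀ y ∈ B, ∀ y' ∈ B, x ≠ x' → y ≠ y' → x + x' + y + y' = 0 → α (x + x') = 1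

namespace IsCubicForm

variable {n : ℕ} {α : (Fin n → ZMod 2) → ZMod 2} {A B : Finset (Fin n → ZMod 2)}

theorem sum_filter_lt_eq_zero (hα : IsCubicForm α) {ι : Type*} [Fintype ι] [LinearOrder ι]
    (hι : Even (Fintype.card ι)) {u : ι → Fin n → ZMod 2} (hu : ∑ a, u a = 0) :
    ∑ p : ι × ι with p.1 < p.2, α (u p.1 + u p.2) = 0 := by
  obtain ⟨c, hc⟩ := hα
  have hcoord (i : Fin n) : ∑ a, u a i = 0 := by simpa using congrFun hu i
  simp only [hc]
  rw [sum_comm]; refine sum_eq_zero fun i _ => ?_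
  rw [sum_comm]; refine sum_eq_zero fun j _ => ?_
  rw [sum_comm]; refine sum_eq_zero fun k _ => ?_
  split_ifs
  · simp only [Pi.add_apply, mul_assoc, ← mul_sum]
    simp only [← mul_assoc,
      sum_filter_lt_add_mul_add_mul_add_eq_zero hι (hcoord i) (hcoord j) (hcoord k), mul_zero]
  · exact sum_const_zero

theorem not_injective_of_mem_zeroSumTuples (hα : IsCubicForm α)
    (hq : IsOneOnProperQuadruples α A B) (t : Fin n → ZMod 2) {u : Fin 6 → Fin n → ZMod 2}
    (hu : u ∈ zeroSumTuples (Fin 6) {a ∈ A | t - a ∈ B}) : ¬ Function.Injective u := by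
  intro hinj
  simp only [zeroSumTuples, mem_filter, Fintype.mem_piFinset] at hu
  have hone : ∀ p ∈ ({p : Fin 6 × Fin 6 | p.1 < p.2} : Finset _), α (u p.1 + u p.2) = 1 := by
    intro p hp
    have hne : u p.1 ≠ u p.2 := hinj.ne (mem_filter.1 hp).2.ne
    refine hq _ (hu.1 p.1).1 _ (hu.1 p.2).1 _ (hu.1 p.1).2 _ (hu.1 p.2).2 hne
      (sub_right_injective.ne hne) ?_
    rw [show u p.1 + u p.2 + (t - u p.1) + (t - u p.2) = t + t by abel, ZModModule.add_self]
  have h0 := hα.sum_filter_lt_eq_zero (by decide) hu.2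
  rw [sum_congr rfl hone] at h0
  exact absurd h0 (by decide)

theorem card_filter_sub_mem_sq_le (hα : IsCubicForm α) (hq : IsOneOnProperQuadruples α A B)
    (t : Fin n → ZMod 2) : #{a ∈ A | t - a ∈ B} ^ 2 ≤ 30 * #(3 • B) := by
  set X := {a ∈ A | t - a ∈ B}
  have hZ : #(zeroSumTuples (Fin 6) X) ≤ 30 * #X ^ 4 :=
    card_zeroSumTuples_le (by simp) fun u hu => hα.not_injective_of_mem_zeroSumTuples hq t hu
  have h6 : #X ^ 6 ≤ #(3 • B) * (30 * #X ^ 4) :=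
    (card_pow_le_card_nsmul_mul_card_filter_sum_eq 3 fun x hx => (mem_filter.1 hx).2).trans
      (Nat.mul_le_mul_left _ ((card_filter_sum_eq_sum_le_card_zeroSumTuples X 3 3).trans hZ))
  rcases (#X).eq_zero_or_pos with hX | hX
  · simp [hX]
  · refine Nat.le_of_mul_le_mul_right ?_ (pow_pos hX 4)
    calc #X ^ 2 * #X ^ 4 = #X ^ 6 := by ring
      _ ≤ #(3 • B) * (30 * #X ^ 4) := h6
      _ = 30 * #(3 • B) * #X ^ 4 := by ring

theorem card_pow_six_le_mul_card_add_pow_five (hα : IsCubicForm α) (hA : A.Nonempty)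
    (hAB : #A ≤ #B) (hq : IsOneOnProperQuadruples α A B) : #A ^ 6 ≤ 30 * #(A + B) ^ 5 := by
  have hB : B.Nonempty := card_pos.1 (hA.card_pos.trans_le hAB)
  obtain ⟨t, -, ht⟩ := exists_max_image (A + B) (fun t => #{a ∈ A | t - a ∈ B}) (hA.add hB)
  set r := #{a ∈ A | t - a ∈ B}
  have hsum : #A * #B ≤ #(A + B) * r := by
    rw [← sum_card_filter_sub_mem_eq_card_mul_card]
    exact (sum_le_card_nsmul _ _ _ ht).trans_eq (smul_eq_mul _ _)
  have hr : r ^ 2 ≤ 30 * #(3 • B) := hα.card_filter_sub_mem_sq_le hq t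
  have hpl : #A ^ 2 * #(3 • B) ≤ #(A + B) ^ 3 := by
    refine Nat.le_of_mul_le_mul_left ?_ hA.card_pos
    calc #A * (#A ^ 2 * #(3 • B)) = #A ^ 3 * #(3 • B) := by ring
      _ ≤ #A * #(A + B) ^ 3 := card_pow_mul_card_nsmul_le hA B 3
  calc #A ^ 6 ≤ #A ^ 2 * (#A * #B) ^ 2 := by
        rw [show #A ^ 6 = #A ^ 2 * (#A * #A) ^ 2 by ring]; gcongr
    _ ≤ #A ^ 2 * (#(A + B) * r) ^ 2 := by gcongr
    _ = #(A + B) ^ 2 * (#A ^ 2 * r ^ 2) := by ring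
    _ ≤ #(A + B) ^ 2 * (#A ^ 2 * (30 * #(3 • B))) := by gcongr
    _ = #(A + B) ^ 2 * (30 * (#A ^ 2 * #(3 • B))) := by ring
    _ ≤ #(A + B) ^ 2 * (30 * #(A + B) ^ 3) := by gcongr
    _ = 30 * #(A + B) ^ 5 := by ring

end IsCubicForm

/-- There exists a constant `C > 0` such that for every `n`, every cubic form
`α` on `𝔽₂ⁿ`, and all subsets `A, B ⊆ 𝔽₂ⁿ` with `1 ≤ |A| ≤ |B|`: if every proper additive
quadruple `(x, x', y, y')` (with `x ≠ x' ∈ A`, `y ≠ y' ∈ B`, `x + x' + y + y' = 0`)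
satisfies `α(x + x') = 1`, then `|A + B| ≥ C · |A|^{6/5}`. -/
theorem sumset_lower_bound_of_additive_quadruples :
    ∃ C : ℝ, 0 < C ∧
      ∀ (n : ℕ) (α : (Fin n → ZMod 2) → ZMod 2), IsCubicForm α →
        ∀ A B : Finset (Fin n → ZMod 2), 1 ≤ A.card → A.card ≤ B.card →
          (∀ x ∈ A, ∀ x' ∈ A, ∀ y ∈ B, ∀ y' ∈ B,
            x ≠ x' → y ≠ y' → x + x' + y + y' = 0 → α (x + x') = 1) →
          C * (A.card : ℝ) ^ ((6 : ℝ) / 5) ≤ ((A + B).card : ℝ) := by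
  refine ⟨1 / 2, by norm_num, fun n α hα A B hA hAB hq => ?_⟩
  have hnat : (#A : ℝ) ^ 6 ≤ 30 * (#(A + B) : ℝ) ^ 5 := by
    exact_mod_cast hα.card_pow_six_le_mul_card_add_pow_five (card_pos.1 hA) hAB hq
  have hpow : ((#A : ℝ) ^ ((6 : ℝ) / 5)) ^ 5 ≤ (2 * (#(A + B) : ℝ)) ^ 5 := by
    rw [← Real.rpow_natCast, ← Real.rpow_mul (by positivity)]
    norm_num
    nlinarith [pow_nonneg (Nat.cast_nonneg (α := ℝ) #(A + B)) 5]
  linarith [le_of_pow_le_pow_left₀ (by norm_num) (by positivity) hpow]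
end
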